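/- arXiv:1909.01931 — 6 statements merged into one kernel-verified Lean document; each statement's English description precedes it below -/
import Mathlib

section
/- For each k ∈ {1,…,n} and every λ ∈ ℝ, E[exp(λ D_k − (λ²/2) V_k) | X₁, …, X_{k−1}] ≤ 1 almost surely, where D_k = E[f(S) | X₁,…,X_k] − E[f(S) | X₁,…,X_{k−1}] is the k-th Doob martingale difference of f(S) and V_k = E[(f(S) − f(S^(k)))² | X₁,…,X_k]. -/
/-!
Write `Δ = f(S) - f(S⁽ᵏ⁾)` and `𝓕ⱼ = σ(X₁, …, Xⱼ)`. Since `f(S⁽ᵏ⁾)` does not involve `Xₖ`, and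
swapping `Xₖ` with `Xₖ'` preserves the joint law while fixing the other coordinates, we get
`E[f(S⁽ᵏ⁾) | 𝓕ₖ] = E[f(S⁽ᵏ⁾) | 𝓕ₖ₋₁] = E[f(S) | 𝓕ₖ₋₁]`. Hence the exponent
`λ Dₖ - (λ²/2) Vₖ` is `E[λΔ - (λΔ)²/2 | 𝓕ₖ]`, and conditional Jensen bounds the conditional
expectation given `𝓕ₖ₋₁` by that of `exp(λΔ - (λΔ)²/2)`. The same swap turns `Δ` into `-Δ` without
changing this conditional expectation, so it is the conditional expectation of
`cosh(λΔ) exp(-(λΔ)²/2) ≤ 1`.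
-/

set_option autoImplicit false

open MeasureTheory ProbabilityTheory Real

/-- The σ-algebra generated by the coordinates `X i` for `(i : ℕ) < k`,
i.e. by the first `k` components of the sample. -/
def firstCoordsSigma {Ω : Type*} {n : ℕ} {Z : Fin n → Type*} [∀ i, MeasurableSpace (Z i)]
    (X : ∀ i, Ω → Z i) (k : ℕ) : MeasurableSpace Ω :=
  ⨆ i : Fin n, ⨆ _ : (i : ℕ) < k, MeasurableSpace.comap (X i) inferInstance

theorem Real.exp_sub_half_sq_le (x : ℝ) : exp (x - x ^ 2 / 2) ≤ exp (1 / 2) :=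
  exp_le_exp.mpr (by nlinarith [sq_nonneg (x - 1)])

theorem Real.exp_sub_half_sq_add_exp_neg_sub_half_sq_le_two (x : ℝ) :
    exp (x - x ^ 2 / 2) + exp (-x - x ^ 2 / 2) ≤ 2 := by
  calc exp (x - x ^ 2 / 2) + exp (-x - x ^ 2 / 2) = 2 * cosh x * exp (-(x ^ 2 / 2)) := by
        rw [cosh_eq, sub_eq_add_neg, sub_eq_add_neg (-x), exp_add, exp_add]
        ring
    _ ≤ 2 * exp (x ^ 2 / 2) * exp (-(x ^ 2 / 2)) := by
        gcongr
        exact cosh_le_exp_half_sq x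
    _ = 2 := by rw [mul_assoc, ← exp_add, add_neg_cancel, exp_zero, mul_one]

section SymmetricExponent

variable {Ω : Type*} [MeasurableSpace Ω] {μ : Measure Ω} [IsFiniteMeasure μ]

theorem integrable_exp_sub_half_sq {u : Ω → ℝ} (hu : AEStronglyMeasurable u μ) :
    Integrable (fun ω => exp (u ω - u ω ^ 2 / 2)) μ :=
  .of_bound (by fun_prop) (exp (1 / 2)) (.of_forall fun ω => by
    simpa [abs_of_pos (exp_pos _)] using exp_sub_half_sq_le (u ω))

theorem setIntegral_exp_sub_half_sq_le {u : Ω → ℝ} (hu : AEStronglyMeasurable u μ) {A : Set Ω}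
    (hA : MeasurableSet A)
    (hsymm : ∫ ω in A, exp (u ω - u ω ^ 2 / 2) ∂μ = ∫ ω in A, exp (-u ω - u ω ^ 2 / 2) ∂μ) :
    ∫ ω in A, exp (u ω - u ω ^ 2 / 2) ∂μ ≤ μ.real A := by
  have hneg : Integrable (fun ω => exp (-u ω - u ω ^ 2 / 2)) μ := by
    simpa using integrable_exp_sub_half_sq hu.neg
  have hsum : ∫ ω in A, exp (u ω - u ω ^ 2 / 2) + exp (-u ω - u ω ^ 2 / 2) ∂μ ≤ 2 * μ.real A :=
    calc _ ≤ ∫ _ in A, (2 : ℝ) ∂μ :=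
          setIntegral_mono_on ((integrable_exp_sub_half_sq hu).add hneg).integrableOn
            (integrableOn_const (measure_ne_top μ A)) hA
            fun ω _ => exp_sub_half_sq_add_exp_neg_sub_half_sq_le_two (u ω)
      _ = 2 * μ.real A := by rw [setIntegral_const, smul_eq_mul, mul_comm]
  rw [integral_add (integrable_exp_sub_half_sq hu).integrableOn hneg.integrableOn, ← hsymm] at hsum
  linarith

end SymmetricExponent

namespace MeasurableSpace

variable {α : Type*}

theorem isPiSystem_image2_inter (m₁ m₂ : MeasurableSpace α) :
    IsPiSystem (Set.image2 (· ∩ ·) {s | MeasurableSet[m₁] s} {s | MeasurableSet[m₂] s}) := by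
  rintro _ ⟨a, ha, b, hb, rfl⟩ _ ⟨a', ha', b', hb', rfl⟩ -
  exact ⟨a ∩ a', ha.inter ha', b ∩ b', hb.inter hb', (Set.inter_inter_inter_comm a b a' b').symm⟩

theorem sup_eq_generateFrom_image2_inter (m₁ m₂ : MeasurableSpace α) :
    m₁ ⊔ m₂ =
      generateFrom (Set.image2 (· ∩ ·) {s | MeasurableSet[m₁] s} {s | MeasurableSet[m₂] s}) := by
  refine le_antisymm (sup_le (fun a ha => ?_) (fun b hb => ?_)) (generateFrom_le ?_)
  · exact measurableSet_generateFrom ⟨a, ha, Set.univ, MeasurableSet.univ, Set.inter_univ a⟩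
  · exact measurableSet_generateFrom ⟨Set.univ, MeasurableSet.univ, b, hb, Set.univ_inter b⟩
  · rintro _ ⟨a, ha, b, hb, rfl⟩
    exact (le_sup_left (b := m₂) a ha).inter (le_sup_right (a := m₁) b hb)

end MeasurableSpace

theorem setIntegral_eq_of_isPiSystem {α E : Type*} [NormedAddCommGroup E] [NormedSpace ℝ E]
    {m m₀ : MeasurableSpace α} {μ : Measure α} (hm : m ≤ m₀) {s : Set (Set α)}
    (h_eq : m = MeasurableSpace.generateFrom s) (h_inter : IsPiSystem s) {f g : α → E}
    (hf : Integrable f μ) (hg : Integrable g μ) (h_univ : ∫ x, f x ∂μ = ∫ x, g x ∂μ)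
    (basic : ∀ t ∈ s, ∫ x in t, f x ∂μ = ∫ x in t, g x ∂μ) {t : Set α}
    (ht : MeasurableSet[m] t) : ∫ x in t, f x ∂μ = ∫ x in t, g x ∂μ := by
  induction t, ht using MeasurableSpace.induction_on_inter h_eq h_inter with
  | empty => simp
  | basic t ht => exact basic t ht
  | compl t ht ih =>
    rw [setIntegral_compl (hm t ht) hf, setIntegral_compl (hm t ht) hg, ih, h_univ]
  | iUnion t hdisj ht ih =>
    rw [integral_iUnion (fun i => hm _ (ht i)) hdisj hf.integrableOn,
      integral_iUnion (fun i => hm _ (ht i)) hdisj hg.integrableOn]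
    exact tsum_congr ih

section CondExpIndep

variable {Ω : Type*} {m₁ m₂ m₃ m : MeasurableSpace Ω} {μ : Measure Ω} [IsProbabilityMeasure μ]

theorem setIntegral_eq_measureReal_mul_integral_of_indep (h₂ : m₂ ≤ m) (h₃ : m₃ ≤ m)
    {v : Ω → ℝ} (hv : StronglyMeasurable[m₃] v) (hvi : Integrable v μ) (hind : Indep m₃ m₂ μ)
    {b : Set Ω} (hb : MeasurableSet[m₂] b) : ∫ x in b, v x ∂μ = μ.real b * ∫ x, v x ∂μ := by
  rw [← setIntegral_condExp h₂ hvi hb, setIntegral_congr_ae (h₂ b hb)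
    ((condExp_indep_eq h₃ h₂ hv hind).mono fun _ hx _ => hx), setIntegral_const, smul_eq_mul]

theorem condExp_sup_ae_eq_of_indep (h₁₃ : m₁ ≤ m₃) (h₂ : m₂ ≤ m) (h₃ : m₃ ≤ m)
    {f : Ω → ℝ} (hf : StronglyMeasurable[m₃] f) (hfi : Integrable f μ) (hind : Indep m₃ m₂ μ) :
    μ[f | m₁ ⊔ m₂] =ᵐ[μ] μ[f | m₁] := by
  have h₁ : m₁ ≤ m := h₁₃.trans h₃
  refine (ae_eq_condExp_of_forall_setIntegral_eq (sup_le h₁ h₂) hfi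
    (fun _ _ _ => integrable_condExp.integrableOn) (fun s hs _ => ?_)
    (stronglyMeasurable_condExp.mono (le_sup_left : m₁ ≤ m₁ ⊔ m₂)).aestronglyMeasurable).symm
  refine setIntegral_eq_of_isPiSystem (sup_le h₁ h₂)
    (MeasurableSpace.sup_eq_generateFrom_image2_inter m₁ m₂)
    (MeasurableSpace.isPiSystem_image2_inter m₁ m₂) integrable_condExp hfi (integral_condExp h₁)
    ?_ hs
  rintro _ ⟨a, ha, b, hb, rfl⟩
  have hinter : ∀ v : Ω → ℝ, StronglyMeasurable[m₃] v → Integrable v μ →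
      ∫ x in a ∩ b, v x ∂μ = μ.real b * ∫ x in a, v x ∂μ := fun v hv hvi => by
    rw [Set.inter_comm, ← setIntegral_indicator (h₁ a ha), ← integral_indicator (h₁ a ha)]
    exact setIntegral_eq_measureReal_mul_integral_of_indep h₂ h₃ (hv.indicator (h₁₃ a ha))
      (hvi.indicator (h₁ a ha)) hind hb
  rw [hinter _ (stronglyMeasurable_condExp.mono h₁₃) integrable_condExp, hinter _ hf hfi,
    setIntegral_condExp h₁ hfi ha]

end CondExpIndep

section ExponentialBound

variable {Ω : Type*} {m₀ m₁ m : MeasurableSpace Ω} {μ : Measure Ω}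

theorem setLIntegral_exp_condExp_le [IsFiniteMeasure μ] (hm : m₁ ≤ m) {g : Ω → ℝ}
    (hg : Integrable g μ) (hexp : Integrable (fun ω => exp (g ω)) μ) {A : Set Ω}
    (hA : MeasurableSet[m₁] A) :
    ∫⁻ ω in A, ENNReal.ofReal (exp (μ[g | m₁] ω)) ∂μ ≤
      ENNReal.ofReal (∫ ω in A, exp (g ω) ∂μ) := by
  have hjensen := convexOn_exp.map_condExp_le_of_finiteDimensional hm hg hexp
  calc ∫⁻ ω in A, ENNReal.ofReal (exp (μ[g | m₁] ω)) ∂μ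
      ≤ ∫⁻ ω in A, ENNReal.ofReal (μ[fun ω => exp (g ω) | m₁] ω) ∂μ :=
        lintegral_mono_ae (ae_restrict_of_ae (hjensen.mono fun _ h => ENNReal.ofReal_le_ofReal h))
    _ = ENNReal.ofReal (∫ ω in A, μ[fun ω => exp (g ω) | m₁] ω ∂μ) :=
        (ofReal_integral_eq_lintegral_ofReal integrable_condExp.integrableOn
          (ae_restrict_of_ae (condExp_nonneg (.of_forall fun _ => (exp_pos _).le)))).symm
    _ = ENNReal.ofReal (∫ ω in A, exp (g ω) ∂μ) := by rw [setIntegral_condExp hm hexp hA]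

theorem condExp_sub_half_sq_ae_eq {f g : Ω → ℝ} (hf : Integrable f μ)
    (hg : Integrable g μ) (hsq : Integrable (fun ω => (f ω - g ω) ^ 2) μ)
    (hfg : μ[g | m₁] =ᵐ[μ] μ[f | m₀]) (c : ℝ) :
    (fun ω => c * (μ[f | m₁] ω - μ[f | m₀] ω) - c ^ 2 / 2 * μ[fun ω => (f ω - g ω) ^ 2 | m₁] ω)
      =ᵐ[μ] μ[fun ω => c * (f ω - g ω) - (c * (f ω - g ω)) ^ 2 / 2 | m₁] := by
  have hsplit : (fun ω => c * (f ω - g ω) - (c * (f ω - g ω)) ^ 2 / 2) =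
      c • (f - g) - (c ^ 2 / 2) • fun ω => (f ω - g ω) ^ 2 := by
    funext ω
    simp only [Pi.sub_apply, Pi.smul_apply, smul_eq_mul]
    ring
  rw [hsplit]
  filter_upwards [condExp_sub ((hf.sub hg).smul c) (hsq.smul (c ^ 2 / 2)) m₁,
    condExp_smul c (f - g) m₁, condExp_smul (c ^ 2 / 2) (fun ω => (f ω - g ω) ^ 2) m₁,
    condExp_sub hf hg m₁, hfg] with ω h₁ h₂ h₃ h₄ h₅
  simp only [h₁, Pi.sub_apply, h₂, h₃, Pi.smul_apply, smul_eq_mul, h₄, h₅]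

theorem setLIntegral_exp_sub_half_condExp_sq_le [IsFiniteMeasure μ] (h₀₁ : m₀ ≤ m₁)
    (h₁ : m₁ ≤ m) {F G : Ω → ℝ} (hF : Integrable F μ) (hG : Integrable G μ)
    (hsq : Integrable (fun ω => (F ω - G ω) ^ 2) μ) (hGF : μ[G | m₁] =ᵐ[μ] μ[F | m₀]) (c : ℝ)
    {A : Set Ω} (hA : MeasurableSet[m₀] A)
    (hsymm : ∫ ω in A, exp (c * (F ω - G ω) - (c * (F ω - G ω)) ^ 2 / 2) ∂μ =
      ∫ ω in A, exp (c * (G ω - F ω) - (c * (G ω - F ω)) ^ 2 / 2) ∂μ) :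
    ∫⁻ ω in A, ENNReal.ofReal (exp (c * (μ[F | m₁] ω - μ[F | m₀] ω) -
      c ^ 2 / 2 * μ[fun ω => (F ω - G ω) ^ 2 | m₁] ω)) ∂μ ≤ μ A := by
  have hu : Integrable (fun ω => c * (F ω - G ω)) μ := (hF.sub hG).const_mul c
  have hg : Integrable (fun ω => c * (F ω - G ω) - (c * (F ω - G ω)) ^ 2 / 2) μ :=
    (hu.sub (hsq.const_mul (c ^ 2 / 2))).congr
      (.of_forall fun ω => by simp only [Pi.sub_apply]; ring)
  calc ∫⁻ ω in A, ENNReal.ofReal (exp (c * (μ[F | m₁] ω - μ[F | m₀] ω) -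
        c ^ 2 / 2 * μ[fun ω => (F ω - G ω) ^ 2 | m₁] ω)) ∂μ
      = ∫⁻ ω in A, ENNReal.ofReal (exp (μ[fun ω => c * (F ω - G ω) -
          (c * (F ω - G ω)) ^ 2 / 2 | m₁] ω)) ∂μ :=
        lintegral_congr_ae (ae_restrict_of_ae
          ((condExp_sub_half_sq_ae_eq hF hG hsq hGF c).mono fun _ h =>
            congrArg (fun t => ENNReal.ofReal (exp t)) h))
    _ ≤ ENNReal.ofReal (∫ ω in A, exp (c * (F ω - G ω) - (c * (F ω - G ω)) ^ 2 / 2) ∂μ) :=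
        setLIntegral_exp_condExp_le h₁ hg (integrable_exp_sub_half_sq hu.1) (h₀₁ A hA)
    _ ≤ ENNReal.ofReal (μ.real A) := by
        refine ENNReal.ofReal_le_ofReal (setIntegral_exp_sub_half_sq_le hu.1 (h₁ A (h₀₁ A hA))
          (hsymm.trans ?_))
        congr with ω
        ring_nf
    _ = μ A := ENNReal.ofReal_toReal (measure_ne_top μ A)

end ExponentialBound

section Exchangeability

variable {Ω α β : Type*} [MeasurableSpace Ω] [MeasurableSpace α] [MeasurableSpace β]
  {μ : Measure Ω}

theorem identDistrib_prodMk_swap [IsFiniteMeasure μ] {ξ ξ' : Ω → α} {Y : Ω → β}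
    (hξ : Measurable ξ) (hξ' : Measurable ξ') (hY : Measurable Y)
    (hind : IndepFun (fun ω => (ξ ω, ξ' ω)) Y μ) (hξξ' : IndepFun ξ ξ' μ)
    (hid : IdentDistrib ξ ξ' μ μ) :
    IdentDistrib (fun ω => ((ξ ω, ξ' ω), Y ω)) (fun ω => ((ξ' ω, ξ ω), Y ω)) μ μ := by
  have hind' : IndepFun (fun ω => (ξ' ω, ξ ω)) Y μ := hind.comp measurable_swap measurable_id
  refine ⟨by fun_prop, by fun_prop, ?_⟩
  rw [(indepFun_iff_map_prod_eq_prod_map_map (by fun_prop) hY.aemeasurable).mp hind,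
    (indepFun_iff_map_prod_eq_prod_map_map (by fun_prop) hY.aemeasurable).mp hind',
    (indepFun_iff_map_prod_eq_prod_map_map hξ.aemeasurable hξ'.aemeasurable).mp hξξ',
    (indepFun_iff_map_prod_eq_prod_map_map hξ'.aemeasurable hξ.aemeasurable).mp hξξ'.symm,
    hid.map_eq]

theorem ProbabilityTheory.IdentDistrib.setIntegral_preimage_snd_eq {P Q : Ω → α} {Y : Ω → β}
    (h : IdentDistrib (fun ω => (P ω, Y ω)) (fun ω => (Q ω, Y ω)) μ μ) {B : Set β}
    (hB : MeasurableSet B) {φ : α × β → ℝ} (hφ : Measurable φ) :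
    ∫ ω in Y ⁻¹' B, φ (P ω, Y ω) ∂μ = ∫ ω in Y ⁻¹' B, φ (Q ω, Y ω) ∂μ := by
  have hpre : ∀ R : Ω → α, (fun ω => (R ω, Y ω)) ⁻¹' (Set.univ ×ˢ B) = Y ⁻¹' B := fun R => by
    ext; simp
  have hUB : MeasurableSet (Set.univ ×ˢ B : Set (α × β)) := MeasurableSet.univ.prod hB
  calc ∫ ω in Y ⁻¹' B, φ (P ω, Y ω) ∂μ
      = ∫ z in Set.univ ×ˢ B, φ z ∂μ.map (fun ω => (P ω, Y ω)) := by
        rw [setIntegral_map hUB hφ.aestronglyMeasurable h.aemeasurable_fst, hpre]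
    _ = ∫ z in Set.univ ×ˢ B, φ z ∂μ.map (fun ω => (Q ω, Y ω)) := by rw [h.map_eq]
    _ = ∫ ω in Y ⁻¹' B, φ (Q ω, Y ω) ∂μ := by
        rw [setIntegral_map hUB hφ.aestronglyMeasurable h.aemeasurable_snd, hpre]

end Exchangeability

theorem measurable_piSplitAt_symm {ι : Type*} [DecidableEq ι] {β : ι → Type*}
    [∀ i, MeasurableSpace (β i)] (i : ι) : Measurable (Equiv.piSplitAt i β).symm := by
  refine measurable_pi_lambda _ fun j => ?_
  by_cases h : j = i
  · subst h; simpa using measurable_fst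
  · simp only [Equiv.piSplitAt_symm_apply, h, dite_false]
    exact (measurable_pi_apply _).comp measurable_snd

section Sample

variable {Ω : Type*} {n : ℕ} {Z : Fin n → Type*} {X X' : ∀ i, Ω → Z i}

def otherCoords (X : ∀ i, Ω → Z i) (k : Fin n) (ω : Ω) : ∀ j : {j // j ≠ k}, Z j :=
  (Equiv.piSplitAt k Z fun i => X i ω).2

theorem piSplitAt_symm_mk_otherCoords (k : Fin n) (ω : Ω) (a : Z k) :
    (Equiv.piSplitAt k Z).symm (a, otherCoords X k ω) = Function.update (fun i => X i ω) k a := by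
  funext j
  by_cases h : j = k
  · subst h; simp
  · simp [h, otherCoords]

variable [∀ i, MeasurableSpace (Z i)]

theorem measurable_otherCoords [MeasurableSpace Ω] (hX : ∀ i, Measurable (X i)) (k : Fin n) :
    Measurable (otherCoords X k) :=
  measurable_pi_lambda _ fun j => hX j

theorem firstCoordsSigma_le {mΩ : MeasurableSpace Ω} (hX : ∀ i, Measurable (X i)) (k : ℕ) :
    firstCoordsSigma X k ≤ mΩ :=
  iSup₂_le fun i _ => (hX i).comap_le

theorem firstCoordsSigma_mono : Monotone (firstCoordsSigma X) := fun _ _ hkl =>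
  iSup₂_le fun i hi => le_iSup₂_of_le i (hi.trans_le hkl) le_rfl

theorem firstCoordsSigma_succ (k : Fin n) :
    firstCoordsSigma X ((k : ℕ) + 1) =
      firstCoordsSigma X k ⊔ MeasurableSpace.comap (X k) inferInstance := by
  refine le_antisymm (iSup₂_le fun i hi => ?_) (sup_le (firstCoordsSigma_mono k.val.le_succ) ?_)
  · rcases Nat.lt_succ_iff_lt_or_eq.mp hi with hlt | heq
    · exact le_sup_of_le_left (le_iSup₂_of_le i hlt le_rfl)
    · exact le_sup_of_le_right (by rw [Fin.ext heq])
  · exact le_iSup₂_of_le k (Nat.lt_succ_self k) le_rfl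

theorem firstCoordsSigma_le_comap_otherCoords (k : Fin n) :
    firstCoordsSigma X k ≤ MeasurableSpace.comap (otherCoords X k) inferInstance :=
  iSup₂_le fun i hi => by
    have hik : i ≠ k := by rintro rfl; exact lt_irrefl _ hi
    calc MeasurableSpace.comap (X i) inferInstance
        = MeasurableSpace.comap (otherCoords X k)
            (MeasurableSpace.comap (fun y => y ⟨i, hik⟩) inferInstance) := by
          rw [MeasurableSpace.comap_comp]; rfl
      _ ≤ _ := MeasurableSpace.comap_mono (measurable_pi_apply _).comap_le

variable [MeasurableSpace Ω] {μ : Measure Ω}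

theorem measurable_sampleOrCopy (hX : ∀ i, Measurable (X i)) (hX' : ∀ i, Measurable (X' i))
    (p : Fin n × Bool) :
    Measurable ((fun p : Fin n × Bool => if p.2 then X p.1 else X' p.1) p) := by
  rcases p with ⟨i, _ | _⟩
  exacts [hX' i, hX i]

theorem indepFun_pair_otherCoords (hX : ∀ i, Measurable (X i)) (hX' : ∀ i, Measurable (X' i))
    (hindep : iIndepFun (fun p : Fin n × Bool => if p.2 then X p.1 else X' p.1) μ) (k : Fin n) :
    IndepFun (fun ω => (X k ω, X' k ω)) (otherCoords X k) μ :=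
  (hindep.indepFun_finset {(k, true), (k, false)} (Finset.univ.filter fun p => p.1 ≠ k)
      (by simp [Finset.disjoint_left]) (measurable_sampleOrCopy hX hX')).comp
    (φ := fun t => (t ⟨(k, true), by simp⟩, t ⟨(k, false), by simp⟩))
    (ψ := fun t (j : {j // j ≠ k}) => t ⟨(j.1, true), by simpa using j.2⟩)
    ((measurable_pi_apply _).prodMk (measurable_pi_apply _))
    (measurable_pi_lambda _ fun _ => measurable_pi_apply _)

theorem indepFun_sample_copy
    (hindep : iIndepFun (fun p : Fin n × Bool => if p.2 then X p.1 else X' p.1) μ) (k : Fin n) :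
    IndepFun (X k) (X' k) μ :=
  hindep.indepFun (i := (k, true)) (j := (k, false)) (by simp)

theorem indepFun_copy_otherCoords (hX : ∀ i, Measurable (X i)) (hX' : ∀ i, Measurable (X' i))
    (hindep : iIndepFun (fun p : Fin n × Bool => if p.2 then X p.1 else X' p.1) μ) (k : Fin n) :
    IndepFun (fun ω => (X' k ω, otherCoords X k ω)) (X k) μ :=
  (hindep.indepFun_finset (Finset.univ.filter fun p => p ≠ (k, true)) {(k, true)}
      (by simp [Finset.disjoint_left]) (measurable_sampleOrCopy hX hX')).comp
    (φ := fun t => (t ⟨(k, false), by simp⟩,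
      fun j : {j // j ≠ k} => t ⟨(j.1, true), by simp [Prod.ext_iff, j.2]⟩))
    (ψ := fun t => t ⟨(k, true), by simp⟩)
    ((measurable_pi_apply _).prodMk (measurable_pi_lambda _ fun _ => measurable_pi_apply _))
    (measurable_pi_apply _)

variable [IsProbabilityMeasure μ] {f : (∀ i, Z i) → ℝ}

theorem setIntegral_comp_sample_replaced_comm (hX : ∀ i, Measurable (X i))
    (hX' : ∀ i, Measurable (X' i))
    (hindep : iIndepFun (fun p : Fin n × Bool => if p.2 then X p.1 else X' p.1) μ) (k : Fin n)
    (hid : IdentDistrib (X' k) (X k) μ μ) (hf : Measurable f) {G : ℝ × ℝ → ℝ}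
    (hG : Measurable G) {A : Set Ω} (hA : MeasurableSet[firstCoordsSigma X k] A) :
    ∫ ω in A, G (f (fun i => X i ω), f (Function.update (fun i => X i ω) k (X' k ω))) ∂μ =
      ∫ ω in A, G (f (Function.update (fun i => X i ω) k (X' k ω)), f (fun i => X i ω)) ∂μ := by
  obtain ⟨B, hB, rfl⟩ := firstCoordsSigma_le_comap_otherCoords k A hA
  have hF : Measurable fun p => f ((Equiv.piSplitAt k Z).symm p) :=
    hf.comp (measurable_piSplitAt_symm k)
  have hswap := identDistrib_prodMk_swap (hX k) (hX' k) (measurable_otherCoords hX k)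
    (indepFun_pair_otherCoords hX hX' hindep k) (indepFun_sample_copy hindep k) hid.symm
  simpa only [piSplitAt_symm_mk_otherCoords, Function.update_eq_self] using
    hswap.setIntegral_preimage_snd_eq hB
      (φ := fun p => G (f ((Equiv.piSplitAt k Z).symm (p.1.1, p.2)),
        f ((Equiv.piSplitAt k Z).symm (p.1.2, p.2))))
      (hG.comp ((hF.comp (measurable_fst.fst.prodMk measurable_snd)).prodMk
        (hF.comp (measurable_fst.snd.prodMk measurable_snd))))

theorem condExp_sample_replaced_succ_ae_eq (hX : ∀ i, Measurable (X i))
    (hX' : ∀ i, Measurable (X' i))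
    (hindep : iIndepFun (fun p : Fin n × Bool => if p.2 then X p.1 else X' p.1) μ) (k : Fin n)
    (hid : IdentDistrib (X' k) (X k) μ μ) (hf : Measurable f)
    (hfS : Integrable (fun ω => f (fun i => X i ω)) μ)
    (hfSk : Integrable (fun ω => f (Function.update (fun i => X i ω) k (X' k ω))) μ) :
    μ[fun ω => f (Function.update (fun i => X i ω) k (X' k ω)) |
      firstCoordsSigma X ((k : ℕ) + 1)] =ᵐ[μ]
      μ[fun ω => f (fun i => X i ω) | firstCoordsSigma X k] := by
  have hm := firstCoordsSigma_le hX k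
  have hpair : Measurable fun ω => (X' k ω, otherCoords X k ω) :=
    (hX' k).prodMk (measurable_otherCoords hX k)
  have hfSk_pair : StronglyMeasurable[MeasurableSpace.comap
      (fun ω => (X' k ω, otherCoords X k ω)) inferInstance]
      fun ω => f (Function.update (fun i => X i ω) k (X' k ω)) := by
    simp only [← piSplitAt_symm_mk_otherCoords]
    exact ((hf.comp (measurable_piSplitAt_symm k)).comp
      (comap_measurable fun ω => (X' k ω, otherCoords X k ω))).stronglyMeasurable
  rw [firstCoordsSigma_succ]
  have hle : firstCoordsSigma X k ≤
      MeasurableSpace.comap (fun ω => (X' k ω, otherCoords X k ω)) inferInstance :=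
    (firstCoordsSigma_le_comap_otherCoords k).trans
      (measurable_snd.comp (comap_measurable fun ω => (X' k ω, otherCoords X k ω))).comap_le
  refine (condExp_sup_ae_eq_of_indep hle (hX k).comap_le hpair.comap_le hfSk_pair hfSk
    (indepFun_copy_otherCoords hX hX' hindep k)).trans ?_
  refine ae_eq_condExp_of_forall_setIntegral_eq hm hfS
    (fun _ _ _ => integrable_condExp.integrableOn) (fun s hs _ => ?_)
    stronglyMeasurable_condExp.aestronglyMeasurable
  rw [setIntegral_condExp hm hfSk hs]
  exact setIntegral_comp_sample_replaced_comm hX hX' hindep k hid hf measurable_snd hs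

end Sample

/-- for each `k` and every `λ ∈ ℝ`,
`E[exp(λ D_k − (λ²/2) V_k) | X₁, …, X_{k−1}] ≤ 1` almost surely, expressed through the
defining property of conditional expectation: for every set `A` measurable w.r.t.
`σ(X₁, …, X_{k−1})`, the integral of `exp(λ D_k − (λ²/2) V_k)` over `A` is at most `μ A`. -/
theorem stmt0
    {Ω : Type*} [MeasurableSpace Ω] {μ : Measure Ω} [IsProbabilityMeasure μ]
    {n : ℕ} {Z : Fin n → Type*} [∀ i, MeasurableSpace (Z i)]
    (X X' : ∀ i, Ω → Z i)
    (hX : ∀ i, Measurable (X i)) (hX' : ∀ i, Measurable (X' i))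
    -- the 2n components (X₁,…,Xₙ,X₁′,…,Xₙ′) are mutually independent
    (hindep : iIndepFun
      (fun p : Fin n × Bool => if p.2 then X p.1 else X' p.1) μ)
    -- S′ is a copy of S
    (hid : ∀ i, IdentDistrib (X' i) (X i) μ μ)
    (f : (∀ i, Z i) → ℝ) (hf : Measurable f)
    (S : Ω → ∀ i, Z i) (hS : S = fun ω i => X i ω)
    (Sk : Fin n → Ω → ∀ i, Z i)
    (hSk : Sk = fun k ω => Function.update (fun i => X i ω) k (X' k ω))
    -- square integrability assumptions
    (hL2 : MemLp (fun ω => f (S ω)) 2 μ)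
    (hL2k : ∀ k, MemLp (fun ω => f (S ω) - f (Sk k ω)) 2 μ)
    -- Doob martingale differences (0-based: `D k` is the (k+1)-th difference)
    (D : Fin n → Ω → ℝ)
    (hD : D = fun (k : Fin n) ω => (μ[fun ω' => f (S ω') | firstCoordsSigma X ((k : ℕ) + 1)]) ω
      - (μ[fun ω' => f (S ω') | firstCoordsSigma X (k : ℕ)]) ω)
    (Vk : Fin n → Ω → ℝ)
    (hVk : Vk = fun (k : Fin n) ω =>
      (μ[fun ω' => (f (S ω') - f (Sk k ω')) ^ 2 | firstCoordsSigma X ((k : ℕ) + 1)]) ω)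
    (k : Fin n) (lam : ℝ) :
    ∀ A : Set Ω, MeasurableSet[firstCoordsSigma X (k : ℕ)] A →
      ∫⁻ ω in A, ENNReal.ofReal (exp (lam * D k ω - lam ^ 2 / 2 * Vk k ω)) ∂μ ≤ μ A := by
  intro A hA
  subst hS hSk hD hVk
  have hfS := hL2.integrable one_le_two
  have hfSk : Integrable (fun ω => f (Function.update (fun i => X i ω) k (X' k ω))) μ :=
    (hfS.sub ((hL2k k).integrable one_le_two)).congr (.of_forall fun ω => sub_sub_cancel _ _)
  exact setLIntegral_exp_sub_half_condExp_sq_le (firstCoordsSigma_mono k.val.le_succ)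
    (firstCoordsSigma_le hX _) hfS hfSk (hL2k k).integrable_sq
    (condExp_sample_replaced_succ_ae_eq hX hX' hindep k (hid k) hf hfS hfSk) lam hA
    (setIntegral_comp_sample_replaced_comm hX hX' hindep k (hid k) hf
      (G := fun p => exp (lam * (p.1 - p.2) - (lam * (p.1 - p.2)) ^ 2 / 2)) (by fun_prop) hA)
end

section
/- For any y > 0 one has E[ (y / √(y² + E[V_θ | S])) · exp( E[Δ_θ | S]² / (2 (y² + E[V_θ | S])) − KL(p̂_S ‖ p⁰) ) ] ≤ 1. -/
/-!
Draw the parameter `λ` of the canonical-pair inequality from the centred Gaussian of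
variance `y⁻²` and integrate `ϑ` against `p⁰`: by Tonelli the resulting mixture
`E ∫∫ exp(λΔ_ϑ − λ²V_ϑ/2) dp⁰ dN(λ)` is at most `1`. For fixed `ω`, the Donsker–Varadhan
change of measure (Jensen under `p̂_S`, then `dp̂_S/dp⁰`) bounds the inner `p⁰`-integral
below by `exp(λ E[Δ_θ|S] − λ² E[V_θ|S]/2 − KL(p̂_S‖p⁰))`, and completing the square shows
that the Gaussian average of this lower bound is exactly the integrand of the theorem.
-/

set_option autoImplicit false

open MeasureTheory ProbabilityTheory Real
open scoped ENNReal

lemma neg_mul_sq_add_mul_eq {a : ℝ} (ha : a ≠ 0) (δ t : ℝ) :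
    -a * t ^ 2 + δ * t = δ ^ 2 / (4 * a) + -a * (t - δ / (2 * a)) ^ 2 := by
  field_simp; ring

lemma integrable_exp_neg_mul_sq_add_mul {a : ℝ} (ha : 0 < a) (δ : ℝ) :
    Integrable fun t : ℝ => exp (-a * t ^ 2 + δ * t) := by
  simp_rw [neg_mul_sq_add_mul_eq ha.ne', exp_add]
  exact ((integrable_exp_neg_mul_sq ha).comp_sub_right (δ / (2 * a))).const_mul _

lemma integral_exp_neg_mul_sq_add_mul {a : ℝ} (ha : 0 < a) (δ : ℝ) :
    ∫ t : ℝ, exp (-a * t ^ 2 + δ * t) = √(π / a) * exp (δ ^ 2 / (4 * a)) := by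
  simp_rw [neg_mul_sq_add_mul_eq ha.ne', exp_add, integral_const_mul]
  rw [integral_sub_right_eq_self (fun t => exp (-a * t ^ 2)) (δ / (2 * a)),
    integral_gaussian, mul_comm]

/-- For `y > 0`, the density of the centred Gaussian of variance `y⁻²`. -/
noncomputable def mixingDensity (y t : ℝ) : ℝ :=
  y / √(2 * π) * exp (-(y ^ 2 / 2) * t ^ 2)

lemma mixingDensity_nonneg {y : ℝ} (hy : 0 ≤ y) (t : ℝ) : 0 ≤ mixingDensity y t := by
  unfold mixingDensity; positivity

lemma measurable_mixingDensity (y : ℝ) : Measurable (mixingDensity y) := by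
  unfold mixingDensity; fun_prop

lemma mixingDensity_mul_exp_eq (y δ v t : ℝ) :
    mixingDensity y t * exp (t * δ - t ^ 2 / 2 * v)
      = y / √(2 * π) * exp (-((y ^ 2 + v) / 2) * t ^ 2 + δ * t) := by
  rw [mixingDensity, mul_assoc, ← exp_add]; ring_nf

lemma integrable_mixingDensity_mul_exp {y v : ℝ} (hyv : 0 < y ^ 2 + v) (δ : ℝ) :
    Integrable fun t => mixingDensity y t * exp (t * δ - t ^ 2 / 2 * v) := by
  simp_rw [mixingDensity_mul_exp_eq]
  exact (integrable_exp_neg_mul_sq_add_mul (half_pos hyv) δ).const_mul _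

lemma integral_mixingDensity_mul_exp {y v : ℝ} (hyv : 0 < y ^ 2 + v) (δ : ℝ) :
    ∫ t, mixingDensity y t * exp (t * δ - t ^ 2 / 2 * v)
      = y / √(y ^ 2 + v) * exp (δ ^ 2 / (2 * (y ^ 2 + v))) := by
  simp_rw [mixingDensity_mul_exp_eq]
  rw [integral_const_mul, integral_exp_neg_mul_sq_add_mul (half_pos hyv),
    show π / ((y ^ 2 + v) / 2) = 2 * π / (y ^ 2 + v) by field_simp,
    sqrt_div (by positivity),
    show δ ^ 2 / (4 * ((y ^ 2 + v) / 2)) = δ ^ 2 / (2 * (y ^ 2 + v)) by ring]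
  have : √(2 * π) ≠ 0 := by positivity
  field_simp

lemma lintegral_mixingDensity {y : ℝ} (hy : 0 < y) :
    ∫⁻ t, ENNReal.ofReal (mixingDensity y t) = 1 := by
  have h := integral_mixingDensity_mul_exp (v := 0) (by positivity) 0
  have hint := integrable_mixingDensity_mul_exp (v := 0) (y := y) (by positivity) 0
  simp only [mul_zero, sub_zero, exp_zero, mul_one, add_zero, zero_pow two_ne_zero,
    zero_div, sqrt_sq hy.le, div_self hy.ne'] at h hint
  rw [← ofReal_integral_eq_lintegral_ofReal hint (ae_of_all _ (mixingDensity_nonneg hy.le)), h,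
    ENNReal.ofReal_one]

section DonskerVaradhan

variable {Θ : Type*} [MeasurableSpace Θ] {ν ρ : Measure Θ}

lemma ofReal_exp_integral_le_lintegral [IsProbabilityMeasure ν] {g : Θ → ℝ}
    (hg : Integrable g ν) :
    ENNReal.ofReal (exp (∫ ϑ, g ϑ ∂ν)) ≤ ∫⁻ ϑ, ENNReal.ofReal (exp (g ϑ)) ∂ν := by
  by_cases htop : ∫⁻ ϑ, ENNReal.ofReal (exp (g ϑ)) ∂ν = ∞
  · exact htop ▸ le_top
  have hexp : Integrable (fun ϑ => exp (g ϑ)) ν := by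
    refine ⟨continuous_exp.comp_aestronglyMeasurable hg.1, ?_⟩
    rw [hasFiniteIntegral_iff_ofReal (ae_of_all _ fun _ => (exp_pos _).le)]
    exact lt_top_iff_ne_top.mpr htop
  rw [← ofReal_integral_eq_lintegral_ofReal hexp (ae_of_all _ fun _ => (exp_pos _).le)]
  exact ENNReal.ofReal_le_ofReal <| convexOn_exp.map_integral_le continuous_exp.continuousOn
    isClosed_univ (ae_of_all _ fun _ => Set.mem_univ _) hg hexp

lemma lintegral_exp_sub_llr_le [IsFiniteMeasure ν] [ν.HaveLebesgueDecomposition ρ]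
    (hac : ν ≪ ρ) {f : Θ → ℝ} (hf : AEMeasurable f ρ) :
    ∫⁻ ϑ, ENNReal.ofReal (exp (f ϑ - llr ν ρ ϑ)) ∂ν
      ≤ ∫⁻ ϑ, ENNReal.ofReal (exp (f ϑ)) ∂ρ := by
  rw [← lintegral_rnDeriv_mul hac (f := fun ϑ => ENNReal.ofReal (exp (f ϑ - llr ν ρ ϑ)))
    (hf.sub (measurable_llr ν ρ).aemeasurable).exp.ennreal_ofReal]
  refine lintegral_mono_ae ?_
  filter_upwards [Measure.rnDeriv_lt_top ν ρ] with ϑ hfin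
  rcases eq_or_ne (ν.rnDeriv ρ ϑ) 0 with hzero | hpos
  · simp [hzero]
  have hr : 0 < (ν.rnDeriv ρ ϑ).toReal := ENNReal.toReal_pos hpos hfin.ne
  refine le_of_eq ?_
  calc ν.rnDeriv ρ ϑ * ENNReal.ofReal (exp (f ϑ - llr ν ρ ϑ))
      = ENNReal.ofReal (ν.rnDeriv ρ ϑ).toReal
          * ENNReal.ofReal (exp (f ϑ) / (ν.rnDeriv ρ ϑ).toReal) := by
        rw [ENNReal.ofReal_toReal hfin.ne, llr_def, exp_sub, exp_log hr]
    _ = ENNReal.ofReal (exp (f ϑ)) := by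
        rw [← ENNReal.ofReal_mul hr.le, mul_div_cancel₀ _ hr.ne']

/-- Donsker–Varadhan: `∫ f dν − KL(ν‖ρ) ≤ log ∫ exp f dρ`. -/
lemma ofReal_exp_integral_sub_integral_llr_le [IsProbabilityMeasure ν]
    [ν.HaveLebesgueDecomposition ρ] (hac : ν ≪ ρ) (hllr : Integrable (llr ν ρ) ν)
    {f : Θ → ℝ} (hfm : AEMeasurable f ρ) (hf : Integrable f ν) :
    ENNReal.ofReal (exp (∫ ϑ, f ϑ ∂ν - ∫ ϑ, llr ν ρ ϑ ∂ν))
      ≤ ∫⁻ ϑ, ENNReal.ofReal (exp (f ϑ)) ∂ρ := by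
  rw [← integral_sub hf hllr]
  exact (ofReal_exp_integral_le_lintegral (hf.sub hllr)).trans
    (lintegral_exp_sub_llr_le hac hfm)

end DonskerVaradhan

lemma ofReal_mul_exp_le_lintegral_mixingDensity_mul {Θ : Type*} [MeasurableSpace Θ]
    {ν ρ : Measure Θ} [IsProbabilityMeasure ν] [ν.HaveLebesgueDecomposition ρ]
    (hac : ν ≪ ρ) (hllr : Integrable (llr ν ρ) ν) {d v : Θ → ℝ}
    (hdm : AEMeasurable d ρ) (hvm : AEMeasurable v ρ)
    (hd : Integrable d ν) (hv : Integrable v ν)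
    {y : ℝ} (hy : 0 ≤ y) (hyv : 0 < y ^ 2 + ∫ ϑ, v ϑ ∂ν) :
    ENNReal.ofReal (y / √(y ^ 2 + ∫ ϑ, v ϑ ∂ν) *
        exp ((∫ ϑ, d ϑ ∂ν) ^ 2 / (2 * (y ^ 2 + ∫ ϑ, v ϑ ∂ν)) - ∫ ϑ, llr ν ρ ϑ ∂ν))
      ≤ ∫⁻ t, ENNReal.ofReal (mixingDensity y t) *
          ∫⁻ ϑ, ENNReal.ofReal (exp (t * d ϑ - t ^ 2 / 2 * v ϑ)) ∂ρ := by
  set D := ∫ ϑ, d ϑ ∂ν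
  set W := ∫ ϑ, v ϑ ∂ν
  set K := ∫ ϑ, llr ν ρ ϑ ∂ν
  have hint := (integrable_mixingDensity_mul_exp hyv D).mul_const (exp (-K))
  rw [sub_eq_add_neg, exp_add, ← mul_assoc, ← integral_mixingDensity_mul_exp hyv,
    ← integral_mul_const, ofReal_integral_eq_lintegral_ofReal hint
      (ae_of_all _ fun t => by have := mixingDensity_nonneg hy t; positivity)]
  refine lintegral_mono fun t => ?_
  have hmean : ∫ ϑ, (t * d ϑ - t ^ 2 / 2 * v ϑ) ∂ν = t * D - t ^ 2 / 2 * W := by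
    rw [integral_sub (hd.const_mul _) (hv.const_mul _), integral_const_mul, integral_const_mul]
  rw [mul_assoc, ← exp_add, ← sub_eq_add_neg, ← hmean,
    ENNReal.ofReal_mul (mixingDensity_nonneg hy t)]
  gcongr
  exact ofReal_exp_integral_sub_integral_llr_le hac hllr
    ((hdm.const_mul _).sub (hvm.const_mul _)) ((hd.const_mul _).sub (hv.const_mul _))

lemma lintegral_lintegral_mul_lintegral_le_lintegral {Ω T Θ : Type*} [MeasurableSpace Ω]
    [MeasurableSpace T] [MeasurableSpace Θ] {μ : Measure Ω} {η : Measure T} {ρ : Measure Θ}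
    [SFinite μ] [SFinite η] [IsProbabilityMeasure ρ] {g : T → ℝ≥0∞} (hg : Measurable g)
    {F : Ω → T → Θ → ℝ≥0∞} (hF : Measurable fun p : (Ω × T) × Θ => F p.1.1 p.1.2 p.2)
    (hF_le : ∀ t ϑ, ∫⁻ ω, F ω t ϑ ∂μ ≤ 1) :
    ∫⁻ ω, ∫⁻ t, g t * ∫⁻ ϑ, F ω t ϑ ∂ρ ∂η ∂μ ≤ ∫⁻ t, g t ∂η := by
  have hFt (t : T) : Measurable fun p : Ω × Θ => F p.1 t p.2 :=
    hF.comp ((measurable_fst.prodMk measurable_const).prodMk measurable_snd)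
  rw [lintegral_lintegral_swap
    ((hg.comp measurable_snd).mul hF.lintegral_prod_right').aemeasurable]
  refine lintegral_mono fun t => ?_
  rw [lintegral_const_mul _ (hFt t).lintegral_prod_right',
    lintegral_lintegral_swap (hFt t).aemeasurable]
  calc g t * ∫⁻ ϑ, ∫⁻ ω, F ω t ϑ ∂μ ∂ρ ≤ g t * ∫⁻ _, 1 ∂ρ := by
        gcongr with ϑ; exact hF_le t ϑ
    _ = g t := by simp

theorem stmt5_general
    {Ω Z Θ : Type*} [MeasurableSpace Ω] [MeasurableSpace Z] [MeasurableSpace Θ]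
    {μ : Measure Ω} [IsProbabilityMeasure μ]
    (S : Ω → Z)
    (Δ V : Θ → Ω → ℝ)
    (hΔ : Measurable (Function.uncurry Δ)) (hVmeas : Measurable (Function.uncurry V))
    (hV0 : ∀ ϑ ω, 0 ≤ V ϑ ω)
    -- each pair `(Δ_ϑ, √V_ϑ)` is a canonical pair
    (hcanon : ∀ ϑ, ∀ lam : ℝ,
      ∫⁻ ω, ENNReal.ofReal (exp (lam * Δ ϑ ω - lam ^ 2 / 2 * V ϑ ω)) ∂μ ≤ 1)
    (phat : Kernel Z Θ) [IsMarkovKernel phat]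
    (p0 : Measure Θ) [IsProbabilityMeasure p0]
    -- a.s. absolute continuity and a.s. finiteness of the KL divergence
    (hac : ∀ᵐ ω ∂μ, phat (S ω) ≪ p0)
    (hKLint : ∀ᵐ ω ∂μ,
      Integrable (fun ϑ => log ((phat (S ω)).rnDeriv p0 ϑ).toReal) (phat (S ω)))
    (KL : Ω → ℝ)
    (hKL : KL = fun ω => ∫ ϑ, log ((phat (S ω)).rnDeriv p0 ϑ).toReal ∂(phat (S ω)))
    -- `E[Δ_θ | S]` and `E[V_θ | S]` are well defined and finite
    (hΔint : ∀ᵐ ω ∂μ, Integrable (fun ϑ => Δ ϑ ω) (phat (S ω)))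
    (hVint : ∀ᵐ ω ∂μ, Integrable (fun ϑ => V ϑ ω) (phat (S ω)))
    (Dbar Vbar : Ω → ℝ)
    (hDbar : Dbar = fun ω => ∫ ϑ, Δ ϑ ω ∂(phat (S ω)))
    (hVbar : Vbar = fun ω => ∫ ϑ, V ϑ ω ∂(phat (S ω)))
    (y : ℝ) (hy : 0 < y) :
    ∫⁻ ω, ENNReal.ofReal ((y / sqrt (y ^ 2 + Vbar ω)) *
        exp (Dbar ω ^ 2 / (2 * (y ^ 2 + Vbar ω)) - KL ω)) ∂μ ≤ 1 := by
  subst hKL hDbar hVbar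
  have hmix : Measurable fun p : (Ω × ℝ) × Θ =>
      ENNReal.ofReal (exp (p.1.2 * Δ p.2 p.1.1 - p.1.2 ^ 2 / 2 * V p.2 p.1.1)) := by
    have hswap : Measurable fun p : (Ω × ℝ) × Θ => (p.2, p.1.1) := by fun_prop
    have hΔ' : Measurable fun p : (Ω × ℝ) × Θ => Δ p.2 p.1.1 := hΔ.comp hswap
    have hV' : Measurable fun p : (Ω × ℝ) × Θ => V p.2 p.1.1 := hVmeas.comp hswap
    fun_prop
  calc
    _ ≤ ∫⁻ ω, ∫⁻ t, ENNReal.ofReal (mixingDensity y t) *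
          ∫⁻ ϑ, ENNReal.ofReal (exp (t * Δ ϑ ω - t ^ 2 / 2 * V ϑ ω)) ∂p0 ∂volume ∂μ := by
      refine lintegral_mono_ae ?_
      filter_upwards [hac, hKLint, hΔint, hVint] with ω hacω hKLω hΔω hVω
      have hVbar0 : 0 ≤ ∫ ϑ, V ϑ ω ∂(phat (S ω)) := integral_nonneg fun ϑ => hV0 ϑ ω
      exact ofReal_mul_exp_le_lintegral_mixingDensity_mul hacω hKLω
        hΔ.of_uncurry_right.aemeasurable hVmeas.of_uncurry_right.aemeasurable hΔω hVω hy.le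
        (by positivity)
    _ ≤ ∫⁻ t, ENNReal.ofReal (mixingDensity y t) :=
      lintegral_lintegral_mul_lintegral_le_lintegral
        (measurable_mixingDensity y).ennreal_ofReal hmix fun t ϑ => hcanon ϑ t
    _ = 1 := lintegral_mixingDensity hy

/-- for a canonical family `(Δ_ϑ, √V_ϑ)` and a posterior kernel `p̂`, for any
`y > 0`, `E[(y/√(y² + E[V_θ|S])) exp(E[Δ_θ|S]²/(2(y² + E[V_θ|S])) − KL(p̂_S‖p⁰))] ≤ 1`,
where `E[Δ_θ|S](ω) = ∫ Δ(ϑ,ω) p̂_{S ω}(dϑ)` and similarly for `V`. -/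
theorem stmt5
    {Ω Z Θ : Type*} [MeasurableSpace Ω] [MeasurableSpace Z] [MeasurableSpace Θ]
    {μ : Measure Ω} [IsProbabilityMeasure μ]
    (S : Ω → Z) (hS : Measurable S)
    (Δ V : Θ → Ω → ℝ)
    (hΔ : Measurable (Function.uncurry Δ)) (hVmeas : Measurable (Function.uncurry V))
    (hV0 : ∀ ϑ ω, 0 ≤ V ϑ ω)
    -- each pair `(Δ_ϑ, √V_ϑ)` is a canonical pair
    (hcanon : ∀ ϑ, ∀ lam : ℝ,
      ∫⁻ ω, ENNReal.ofReal (exp (lam * Δ ϑ ω - lam ^ 2 / 2 * V ϑ ω)) ∂μ ≤ 1)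
    (phat : Kernel Z Θ) [IsMarkovKernel phat]
    (p0 : Measure Θ) [IsProbabilityMeasure p0]
    -- a.s. absolute continuity and a.s. finiteness of the KL divergence
    (hac : ∀ᵐ ω ∂μ, phat (S ω) ≪ p0)
    (hKLint : ∀ᵐ ω ∂μ,
      Integrable (fun ϑ => log ((phat (S ω)).rnDeriv p0 ϑ).toReal) (phat (S ω)))
    (KL : Ω → ℝ)
    (hKL : KL = fun ω => ∫ ϑ, log ((phat (S ω)).rnDeriv p0 ϑ).toReal ∂(phat (S ω)))
    -- `E[Δ_θ | S]` and `E[V_θ | S]` are well defined and finite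
    (hΔint : ∀ᵐ ω ∂μ, Integrable (fun ϑ => Δ ϑ ω) (phat (S ω)))
    (hVint : ∀ᵐ ω ∂μ, Integrable (fun ϑ => V ϑ ω) (phat (S ω)))
    (Dbar Vbar : Ω → ℝ)
    (hDbar : Dbar = fun ω => ∫ ϑ, Δ ϑ ω ∂(phat (S ω)))
    (hVbar : Vbar = fun ω => ∫ ϑ, V ϑ ω ∂(phat (S ω)))
    (y : ℝ) (hy : 0 < y) :
    ∫⁻ ω, ENNReal.ofReal ((y / sqrt (y ^ 2 + Vbar ω)) *
        exp (Dbar ω ^ 2 / (2 * (y ^ 2 + Vbar ω)) - KL ω)) ∂μ ≤ 1 :=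
  stmt5_general S Δ V hΔ hVmeas hV0 hcanon phat p0 hac hKLint KL hKL hΔint hVint Dbar Vbar hDbar
    hVbar y hy
end

section
/- For every x ≥ 0 one has E[ exp( x · √( ( E[Δ_θ | S]² / (E[V_θ] + E[V_θ | S]) − 2 KL(p̂_S ‖ p⁰) )₊ ) ) ] ≤ 2 e^{x²}, where (s)₊ = max{0, s}. -/
/-!
Fix `t ∈ ℝ`. Donsker–Varadhan for `p̂_S ≪ p⁰` bounds
`exp (t E[Δ_θ|S] - t² E[V_θ|S] / 2 - KL)` by `∫ exp (t Δ_ϑ - t² V_ϑ / 2) dp⁰(ϑ)`, whose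
expectation is at most `1` by Tonelli and the canonical-pair property. Averaging over
`t ~ N(0, c⁻¹)` with `c = E[V_θ]` turns the left side into
`√(c / (c + v)) exp (d² / (2 (c + v)) - KL)`, with `d = E[Δ_θ|S]` and `v = E[V_θ|S]`,
which therefore also has expectation at most `1`. Finally, with `A = d² / (2 (c + v)) - KL`,
`exp (x √(2 A₊)) ≤ e^{x²} e^{A₊/2}` and `2 e^{A₊/2} ≤ R e^A + R⁻¹ + 1` for
`R = √(c / (c + v)) ∈ (0, 1]`, where `R⁻¹ ≤ 1 + v / (2c)` and `E[v] = c`, give the bound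
`(7/4) e^{x²}`.
-/

set_option autoImplicit false

open MeasureTheory ProbabilityTheory Real
open scoped ENNReal

lemma exp_mul_sub_mul_sq_eq {b : ℝ} (hb : 0 < b) (d t : ℝ) :
    exp (d * t - b * t ^ 2) = exp (d ^ 2 / (4 * b)) * exp (-b * (t - d / (2 * b)) ^ 2) := by
  rw [← exp_add]
  congr 1
  field_simp
  ring

lemma integrable_exp_mul_sub_mul_sq {b : ℝ} (hb : 0 < b) (d : ℝ) :
    Integrable fun t : ℝ => exp (d * t - b * t ^ 2) := by
  simp_rw [exp_mul_sub_mul_sq_eq hb]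
  exact ((integrable_exp_neg_mul_sq hb).comp_sub_right _).const_mul _

lemma integral_exp_mul_sub_mul_sq {b : ℝ} (hb : 0 < b) (d : ℝ) :
    ∫ t : ℝ, exp (d * t - b * t ^ 2) = √(π / b) * exp (d ^ 2 / (4 * b)) := by
  simp_rw [exp_mul_sub_mul_sq_eq hb]
  rw [integral_const_mul, integral_sub_right_eq_self (fun t => exp (-b * t ^ 2)),
    integral_gaussian, mul_comm]

-- `√(c / (2π)) exp (-c t² / 2)` is the density of `N(0, c⁻¹)`.
lemma lintegral_gaussian_mul_exp {c v : ℝ} (hc : 0 < c) (hv : 0 ≤ v) (d : ℝ) :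
    ∫⁻ t : ℝ, ENNReal.ofReal (√(c / (2 * π)) * exp (-(c / 2) * t ^ 2)) *
        ENNReal.ofReal (exp (t * d - t ^ 2 / 2 * v)) =
      ENNReal.ofReal (√(c / (c + v)) * exp (d ^ 2 / (2 * (c + v)))) := by
  have hb : 0 < (c + v) / 2 := by linarith
  have hmul : ∀ t : ℝ,
      √(c / (2 * π)) * exp (-(c / 2) * t ^ 2) * exp (t * d - t ^ 2 / 2 * v) =
        √(c / (2 * π)) * exp (d * t - (c + v) / 2 * t ^ 2) := fun t => by
    rw [mul_assoc, ← exp_add]; ring_nf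
  simp_rw [← ENNReal.ofReal_mul (by positivity : 0 ≤ √(c / (2 * π)) * exp _), hmul]
  rw [← ofReal_integral_eq_lintegral_ofReal ((integrable_exp_mul_sub_mul_sq hb d).const_mul _)
    (ae_of_all _ fun t => by positivity), integral_const_mul, integral_exp_mul_sub_mul_sq hb,
    ← mul_assoc, ← sqrt_mul (by positivity)]
  have hvar : c / (2 * π) * (π / ((c + v) / 2)) = c / (c + v) := by field_simp
  rw [hvar, show 4 * ((c + v) / 2) = 2 * (c + v) by ring]

lemma ofReal_exp_integral_sub_integral_llr_le_s6 {α : Type*} [MeasurableSpace α] {μ ν : Measure α}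
    [IsProbabilityMeasure μ] [IsProbabilityMeasure ν] {f : α → ℝ} (hμν : μ ≪ ν)
    (hfν : AEMeasurable f ν) (hfμ : Integrable f μ) (h_int : Integrable (llr μ ν) μ) :
    ENNReal.ofReal (exp (∫ x, f x ∂μ - ∫ x, llr μ ν x ∂μ)) ≤
      ∫⁻ x, ENNReal.ofReal (exp (f x)) ∂ν := by
  by_cases hexp : Integrable (fun x => exp (f x)) ν
  · have : IsProbabilityMeasure (ν.tilted f) := isProbabilityMeasure_tilted hexp
    -- Gibbs' inequality for `μ` against the tilted measure `ν.tilted f` is Donsker–Varadhan.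
    have hgibbs := InformationTheory.integral_llr_add_sub_measure_univ_nonneg
      (hμν.trans (absolutelyContinuous_tilted hexp))
      (integrable_llr_tilted_right hμν hfμ h_int hexp)
    rw [integral_llr_tilted_right hμν hfμ hexp h_int] at hgibbs
    simp only [probReal_univ, add_sub_cancel_right] at hgibbs
    rw [← ofReal_integral_eq_lintegral_ofReal hexp (ae_of_all _ fun x => (exp_pos _).le)]
    refine ENNReal.ofReal_le_ofReal ?_
    calc exp (∫ x, f x ∂μ - ∫ x, llr μ ν x ∂μ)
        ≤ exp (log (∫ x, exp (f x) ∂ν)) := exp_le_exp.2 (by linarith)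
      _ = ∫ x, exp (f x) ∂ν := exp_log (integral_exp_pos hexp)
  · rw [← lintegral_ofReal_ne_top_iff_integrable (hfν.exp).aestronglyMeasurable
      (ae_of_all _ fun x => (exp_pos _).le), not_ne_iff] at hexp
    simp [hexp]

lemma two_mul_exp_half_max_le {R : ℝ} (hR0 : 0 < R) (hR1 : R ≤ 1) (A : ℝ) :
    2 * exp (max A 0 / 2) ≤ R * exp A + R⁻¹ + 1 := by
  have hRinv : 1 ≤ R⁻¹ := one_le_inv_iff₀.2 ⟨hR0, hR1⟩
  rcases le_total A 0 with hA | hA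
  · rw [max_eq_right hA, zero_div, exp_zero]
    nlinarith [mul_pos hR0 (exp_pos A)]
  · rw [max_eq_left hA]
    have hsq : exp A = exp (A / 2) ^ 2 := by rw [← exp_nat_mul]; ring_nf
    -- `R u² + R⁻¹ - 2 u = R⁻¹ (R u - 1)²` with `u = exp (A / 2)`
    have hamgm : 2 * exp (A / 2) ≤ R * exp A + R⁻¹ := by
      have := mul_nonneg (inv_pos.2 hR0).le (sq_nonneg (R * exp (A / 2) - 1))
      rw [hsq]
      nlinarith [mul_inv_cancel₀ hR0.ne']
    linarith

lemma sqrt_div_le_one_add {c v : ℝ} (hc : 0 < c) (hv : 0 ≤ v) :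
    √((c + v) / c) ≤ 1 + v / (2 * c) := by
  rw [sqrt_le_left (by positivity)]
  have : (c + v) / c = 1 + 2 * (v / (2 * c)) := by field_simp
  nlinarith [sq_nonneg (v / (2 * c))]

lemma exp_mul_sqrt_max_le {c v : ℝ} (hc : 0 < c) (hv : 0 ≤ v) (d K x : ℝ) :
    exp (x * √(max (d ^ 2 / (c + v) - 2 * K) 0)) ≤
      exp (x ^ 2) / 2 *
        (√(c / (c + v)) * exp (d ^ 2 / (2 * (c + v)) - K) + (v / (2 * c) + 2)) := by
  set A := d ^ 2 / (2 * (c + v)) - K with hA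
  set R := √(c / (c + v))
  have hcv : 0 < c + v := by linarith
  have hR0 : 0 < R := sqrt_pos.2 (by positivity)
  have hR1 : R ≤ 1 := sqrt_le_one.2 ((div_le_one hcv).2 (by linarith))
  have hRinv : R⁻¹ ≤ v / (2 * c) + 1 := by
    rw [← sqrt_inv, inv_div]
    linarith [sqrt_div_le_one_add hc hv]
  have hmax : max (d ^ 2 / (c + v) - 2 * K) 0 = 2 * max A 0 := by
    rw [mul_max_of_nonneg _ _ zero_le_two, mul_zero]
    rw [hA]
    field_simp
  set t := √(2 * max A 0)
  have ht : t ^ 2 = 2 * max A 0 := sq_sqrt (by positivity)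
  have hxt : x * t ≤ x ^ 2 + max A 0 / 2 := by nlinarith [sq_nonneg (x - t / 2)]
  calc exp (x * √(max (d ^ 2 / (c + v) - 2 * K) 0))
      = exp (x * t) := by rw [hmax]
    _ ≤ exp (x ^ 2) * exp (max A 0 / 2) := by rw [← exp_add]; exact exp_le_exp.2 hxt
    _ ≤ exp (x ^ 2) * ((R * exp A + R⁻¹ + 1) / 2) := by
        gcongr
        linarith [two_mul_exp_half_max_le hR0 hR1 A]
    _ = exp (x ^ 2) / 2 * (R * exp A + (R⁻¹ + 1)) := by ring
    _ ≤ exp (x ^ 2) / 2 * (R * exp A + (v / (2 * c) + 2)) :=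
        mul_le_mul_of_nonneg_left (by linarith) (by positivity)

section Canonical

variable {Ω Θ : Type*} [MeasurableSpace Ω] [MeasurableSpace Θ] {μ : Measure Ω}
  {Δ V : Θ → Ω → ℝ}

lemma measurable_ofReal_exp_canonical (hΔ : Measurable (Function.uncurry Δ))
    (hV : Measurable (Function.uncurry V)) :
    Measurable fun p : ℝ × Θ × Ω =>
      ENNReal.ofReal (exp (p.1 * Δ p.2.1 p.2.2 - p.1 ^ 2 / 2 * V p.2.1 p.2.2)) := by
  have hΔ' : Measurable fun p : ℝ × Θ × Ω => Δ p.2.1 p.2.2 := hΔ.comp measurable_snd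
  have hV' : Measurable fun p : ℝ × Θ × Ω => V p.2.1 p.2.2 := hV.comp measurable_snd
  fun_prop

lemma measurable_lintegral_ofReal_exp_canonical (hΔ : Measurable (Function.uncurry Δ))
    (hV : Measurable (Function.uncurry V)) (ρ : Measure Θ) [SFinite ρ] :
    Measurable (Function.uncurry fun t ω =>
      ∫⁻ ϑ, ENNReal.ofReal (exp (t * Δ ϑ ω - t ^ 2 / 2 * V ϑ ω)) ∂ρ) :=
  ((measurable_ofReal_exp_canonical hΔ hV).comp
    (measurable_fst.fst.prodMk (measurable_snd.prodMk measurable_fst.snd))).lintegral_prod_right'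

lemma lintegral_lintegral_ofReal_exp_canonical_le_one [SFinite μ]
    (hΔ : Measurable (Function.uncurry Δ)) (hV : Measurable (Function.uncurry V))
    (hcanon : ∀ ϑ, ∀ t : ℝ,
      ∫⁻ ω, ENNReal.ofReal (exp (t * Δ ϑ ω - t ^ 2 / 2 * V ϑ ω)) ∂μ ≤ 1)
    (ρ : Measure Θ) [IsProbabilityMeasure ρ] (t : ℝ) :
    ∫⁻ ω, ∫⁻ ϑ, ENNReal.ofReal (exp (t * Δ ϑ ω - t ^ 2 / 2 * V ϑ ω)) ∂ρ ∂μ ≤ 1 := by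
  have hmeas : Measurable (Function.uncurry fun ω ϑ =>
      ENNReal.ofReal (exp (t * Δ ϑ ω - t ^ 2 / 2 * V ϑ ω))) :=
    (measurable_ofReal_exp_canonical hΔ hV).comp
      (measurable_const.prodMk (measurable_snd.prodMk measurable_fst))
  rw [lintegral_lintegral_swap hmeas.aemeasurable]
  calc ∫⁻ ϑ, ∫⁻ ω, ENNReal.ofReal (exp (t * Δ ϑ ω - t ^ 2 / 2 * V ϑ ω)) ∂μ ∂ρ
      ≤ ∫⁻ _, 1 ∂ρ := lintegral_mono fun ϑ => hcanon ϑ t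
    _ = 1 := by simp

end Canonical

lemma integral_pos_of_ae_pos_integral_add {Ω : Type*} [MeasurableSpace Ω] {μ : Measure Ω}
    [NeZero μ] {f : Ω → ℝ} (hf0 : 0 ≤ᵐ[μ] f) (hf : Integrable f μ)
    (hpos : ∀ᵐ ω ∂μ, 0 < ∫ ω, f ω ∂μ + f ω) : 0 < ∫ ω, f ω ∂μ := by
  refine (integral_nonneg_of_ae hf0).lt_of_ne fun h0 => ?_
  have hzero : f =ᵐ[μ] 0 := (integral_eq_zero_iff_of_nonneg_ae hf0 hf).1 h0.symm
  obtain ⟨ω, hω⟩ := (hpos.and hzero).exists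
  simp [← h0, hω.2] at hω

section GaussianMixture

variable {Ω : Type*} [MeasurableSpace Ω] {μ : Measure Ω} {c : ℝ} {d v K : Ω → ℝ}

/-- Mixing the bounds `E[M t] ≤ 1` over `t ~ N(0, c⁻¹)`. -/
lemma lintegral_ofReal_sqrt_mul_exp_le_one [SFinite μ] {M : ℝ → Ω → ℝ≥0∞}
    (hM : Measurable (Function.uncurry M)) (hM1 : ∀ t, ∫⁻ ω, M t ω ∂μ ≤ 1) (hc : 0 < c)
    (hv : ∀ᵐ ω ∂μ, 0 ≤ v ω)
    (hle : ∀ᵐ ω ∂μ, ∀ t,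
      ENNReal.ofReal (exp (t * d ω - t ^ 2 / 2 * v ω - K ω)) ≤ M t ω) :
    ∫⁻ ω, ENNReal.ofReal (√(c / (c + v ω)) * exp (d ω ^ 2 / (2 * (c + v ω)) - K ω)) ∂μ
      ≤ 1 := by
  set φ : ℝ → ℝ≥0∞ := fun t =>
    ENNReal.ofReal (√(c / (2 * π)) * exp (-(c / 2) * t ^ 2))
  have hφm : Measurable φ := by fun_prop
  have hφ1 : ∫⁻ t, φ t = 1 := by
    simpa [φ, hc.ne'] using lintegral_gaussian_mul_exp hc le_rfl 0
  have hpt : ∀ᵐ ω ∂μ,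
      ENNReal.ofReal (√(c / (c + v ω)) * exp (d ω ^ 2 / (2 * (c + v ω)) - K ω)) ≤
        ∫⁻ t, φ t * M t ω := by
    filter_upwards [hv, hle] with ω hvω hleω
    calc ENNReal.ofReal (√(c / (c + v ω)) * exp (d ω ^ 2 / (2 * (c + v ω)) - K ω))
        = (∫⁻ t, φ t * ENNReal.ofReal (exp (t * d ω - t ^ 2 / 2 * v ω))) *
            ENNReal.ofReal (exp (-K ω)) := by
          rw [lintegral_gaussian_mul_exp hc hvω, ← ENNReal.ofReal_mul (by positivity), mul_assoc,
            ← exp_add, sub_eq_add_neg]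
      _ = ∫⁻ t, φ t * ENNReal.ofReal (exp (t * d ω - t ^ 2 / 2 * v ω - K ω)) := by
          rw [← lintegral_mul_const' _ _ ENNReal.ofReal_ne_top]
          refine lintegral_congr fun t => ?_
          rw [mul_assoc, ← ENNReal.ofReal_mul (exp_pos _).le, ← exp_add, ← sub_eq_add_neg]
      _ ≤ ∫⁻ t, φ t * M t ω := lintegral_mono fun t => mul_le_mul_right (hleω t) _
  have hφM : Measurable (Function.uncurry fun ω t => φ t * M t ω) :=
    (hφm.comp measurable_snd).mul (hM.comp (measurable_snd.prodMk measurable_fst))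
  calc _ ≤ ∫⁻ ω, (∫⁻ t, φ t * M t ω) ∂μ := lintegral_mono_ae hpt
    _ = ∫⁻ t, φ t * ∫⁻ ω, M t ω ∂μ := by
        rw [lintegral_lintegral_swap hφM.aemeasurable]
        exact lintegral_congr fun t => lintegral_const_mul' _ _ ENNReal.ofReal_ne_top
    _ ≤ ∫⁻ t, φ t * 1 := lintegral_mono fun t => mul_le_mul_right (hM1 t) _
    _ = 1 := by simpa using hφ1

lemma lintegral_ofReal_exp_mul_sqrt_le [IsProbabilityMeasure μ] (hc : 0 < c)
    (hv0 : ∀ᵐ ω ∂μ, 0 ≤ v ω) (hv : Integrable v μ) (hvc : ∫ ω, v ω ∂μ = c)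
    (hmix : ∫⁻ ω, ENNReal.ofReal
      (√(c / (c + v ω)) * exp (d ω ^ 2 / (2 * (c + v ω)) - K ω)) ∂μ ≤ 1) (x : ℝ) :
    ∫⁻ ω, ENNReal.ofReal (exp (x * √(max (d ω ^ 2 / (c + v ω) - 2 * K ω) 0))) ∂μ ≤
      ENNReal.ofReal (2 * exp (x ^ 2)) := by
  have hrest_nonneg : ∀ᵐ ω ∂μ, 0 ≤ v ω / (2 * c) + 2 := by
    filter_upwards [hv0] with ω hω
    positivity
  have hrest_int : Integrable (fun ω => v ω / (2 * c) + 2) μ :=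
    (hv.div_const _).add (integrable_const 2)
  have hrest : ∫⁻ ω, ENNReal.ofReal (v ω / (2 * c) + 2) ∂μ = ENNReal.ofReal (5 / 2) := by
    rw [← ofReal_integral_eq_lintegral_ofReal hrest_int hrest_nonneg,
      integral_add (hv.div_const _) (integrable_const 2), integral_div, hvc,
      integral_const, probReal_univ, one_smul,
      show c / (2 * c) + 2 = 5 / 2 by field_simp; norm_num]
  calc _ ≤ ∫⁻ ω, ENNReal.ofReal (exp (x ^ 2) / 2) *
        (ENNReal.ofReal (√(c / (c + v ω)) * exp (d ω ^ 2 / (2 * (c + v ω)) - K ω)) +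
          ENNReal.ofReal (v ω / (2 * c) + 2)) ∂μ := by
        refine lintegral_mono_ae ?_
        filter_upwards [hv0, hrest_nonneg] with ω hω hω'
        rw [← ENNReal.ofReal_add (by positivity) hω',
          ← ENNReal.ofReal_mul (by positivity)]
        exact ENNReal.ofReal_le_ofReal (exp_mul_sqrt_max_le hc hω _ _ x)
    _ = ENNReal.ofReal (exp (x ^ 2) / 2) *
        (∫⁻ ω, ENNReal.ofReal
            (√(c / (c + v ω)) * exp (d ω ^ 2 / (2 * (c + v ω)) - K ω)) ∂μ +
          ENNReal.ofReal (5 / 2)) := by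
        rw [lintegral_const_mul' _ _ ENNReal.ofReal_ne_top, ← hrest,
          lintegral_add_right' _ hrest_int.aemeasurable.ennreal_ofReal]
    _ ≤ ENNReal.ofReal (exp (x ^ 2) / 2) * ENNReal.ofReal (7 / 2) := by
        rw [show (7 / 2 : ℝ) = 1 + 5 / 2 by norm_num,
          ENNReal.ofReal_add zero_le_one (by norm_num), ENNReal.ofReal_one]
        gcongr
    _ ≤ ENNReal.ofReal (2 * exp (x ^ 2)) := by
        rw [← ENNReal.ofReal_mul (by positivity)]
        exact ENNReal.ofReal_le_ofReal (by nlinarith [exp_pos (x ^ 2)])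

end GaussianMixture

theorem stmt6_general
    {Ω Z Θ : Type*} [MeasurableSpace Ω] [MeasurableSpace Z] [MeasurableSpace Θ]
    {μ : Measure Ω} [IsProbabilityMeasure μ]
    (S : Ω → Z)
    (Δ V : Θ → Ω → ℝ)
    (hΔ : Measurable (Function.uncurry Δ)) (hVmeas : Measurable (Function.uncurry V))
    (hV0 : ∀ ϑ ω, 0 ≤ V ϑ ω)
    -- each pair `(Δ_ϑ, √V_ϑ)` is a canonical pair
    (hcanon : ∀ ϑ, ∀ lam : ℝ,
      ∫⁻ ω, ENNReal.ofReal (exp (lam * Δ ϑ ω - lam ^ 2 / 2 * V ϑ ω)) ∂μ ≤ 1)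
    (phat : Kernel Z Θ) [IsMarkovKernel phat]
    (p0 : Measure Θ) [IsProbabilityMeasure p0]
    -- a.s. absolute continuity and a.s. finiteness of the KL divergence
    (hac : ∀ᵐ ω ∂μ, phat (S ω) ≪ p0)
    (hKLint : ∀ᵐ ω ∂μ,
      Integrable (fun ϑ => log ((phat (S ω)).rnDeriv p0 ϑ).toReal) (phat (S ω)))
    (KL : Ω → ℝ)
    (hKL : KL = fun ω => ∫ ϑ, log ((phat (S ω)).rnDeriv p0 ϑ).toReal ∂(phat (S ω)))
    -- `E[Δ_θ | S]` and `E[V_θ | S]` are well defined and finite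
    (hΔint : ∀ᵐ ω ∂μ, Integrable (fun ϑ => Δ ϑ ω) (phat (S ω)))
    (hVint : ∀ᵐ ω ∂μ, Integrable (fun ϑ => V ϑ ω) (phat (S ω)))
    (Dbar Vbar : Ω → ℝ)
    (hDbar : Dbar = fun ω => ∫ ϑ, Δ ϑ ω ∂(phat (S ω)))
    (hVbar : Vbar = fun ω => ∫ ϑ, V ϑ ω ∂(phat (S ω)))
    -- `E[V_θ]` is well defined and finite
    (hVbarInt : Integrable Vbar μ)
    (EV : ℝ) (hEV : EV = ∫ ω, Vbar ω ∂μ)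
    (hpos : ∀ᵐ ω ∂μ, 0 < EV + Vbar ω)
    (x : ℝ) :
    ∫⁻ ω, ENNReal.ofReal (exp (x *
        sqrt (max (Dbar ω ^ 2 / (EV + Vbar ω) - 2 * KL ω) 0))) ∂μ ≤
      ENNReal.ofReal (2 * exp (x ^ 2)) := by
  have hVbar0 : ∀ᵐ ω ∂μ, 0 ≤ Vbar ω :=
    ae_of_all _ fun ω => hVbar ▸ integral_nonneg fun ϑ => hV0 ϑ ω
  have hEVpos : 0 < EV := hEV ▸ integral_pos_of_ae_pos_integral_add hVbar0 hVbarInt (hEV ▸ hpos)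
  have hdonsker : ∀ᵐ ω ∂μ, ∀ t : ℝ,
      ENNReal.ofReal (exp (t * Dbar ω - t ^ 2 / 2 * Vbar ω - KL ω)) ≤
        ∫⁻ ϑ, ENNReal.ofReal (exp (t * Δ ϑ ω - t ^ 2 / 2 * V ϑ ω)) ∂p0 := by
    filter_upwards [hac, hKLint, hΔint, hVint] with ω hacω hKLω hΔω hVω t
    have hΔm : Measurable fun ϑ => Δ ϑ ω := hΔ.comp (measurable_id.prodMk measurable_const)
    have hVm : Measurable fun ϑ => V ϑ ω := hVmeas.comp (measurable_id.prodMk measurable_const)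
    have h := ofReal_exp_integral_sub_integral_llr_le_s6
      (f := fun ϑ => t * Δ ϑ ω - t ^ 2 / 2 * V ϑ ω) hacω (by fun_prop)
      ((hΔω.const_mul t).sub (hVω.const_mul (t ^ 2 / 2))) hKLω
    rw [integral_sub (hΔω.const_mul t) (hVω.const_mul _), integral_const_mul,
      integral_const_mul] at h
    rw [hDbar, hVbar, hKL]
    exact h
  exact lintegral_ofReal_exp_mul_sqrt_le hEVpos hVbar0 hVbarInt hEV.symm
    (lintegral_ofReal_sqrt_mul_exp_le_one (measurable_lintegral_ofReal_exp_canonical hΔ hVmeas p0)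
      (lintegral_lintegral_ofReal_exp_canonical_le_one hΔ hVmeas hcanon p0) hEVpos hVbar0
      hdonsker) x

/-- for every `x ≥ 0`,
`E[exp(x √((E[Δ_θ|S]²/(E[V_θ] + E[V_θ|S]) − 2 KL(p̂_S‖p⁰))₊))] ≤ 2 e^{x²}`. -/
theorem stmt6
    {Ω Z Θ : Type*} [MeasurableSpace Ω] [MeasurableSpace Z] [MeasurableSpace Θ]
    {μ : Measure Ω} [IsProbabilityMeasure μ]
    (S : Ω → Z) (hS : Measurable S)
    (Δ V : Θ → Ω → ℝ)
    (hΔ : Measurable (Function.uncurry Δ)) (hVmeas : Measurable (Function.uncurry V))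
    (hV0 : ∀ ϑ ω, 0 ≤ V ϑ ω)
    -- each pair `(Δ_ϑ, √V_ϑ)` is a canonical pair
    (hcanon : ∀ ϑ, ∀ lam : ℝ,
      ∫⁻ ω, ENNReal.ofReal (exp (lam * Δ ϑ ω - lam ^ 2 / 2 * V ϑ ω)) ∂μ ≤ 1)
    (phat : Kernel Z Θ) [IsMarkovKernel phat]
    (p0 : Measure Θ) [IsProbabilityMeasure p0]
    -- a.s. absolute continuity and a.s. finiteness of the KL divergence
    (hac : ∀ᵐ ω ∂μ, phat (S ω) ≪ p0)
    (hKLint : ∀ᵐ ω ∂μ,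
      Integrable (fun ϑ => log ((phat (S ω)).rnDeriv p0 ϑ).toReal) (phat (S ω)))
    (KL : Ω → ℝ)
    (hKL : KL = fun ω => ∫ ϑ, log ((phat (S ω)).rnDeriv p0 ϑ).toReal ∂(phat (S ω)))
    -- `E[Δ_θ | S]` and `E[V_θ | S]` are well defined and finite
    (hΔint : ∀ᵐ ω ∂μ, Integrable (fun ϑ => Δ ϑ ω) (phat (S ω)))
    (hVint : ∀ᵐ ω ∂μ, Integrable (fun ϑ => V ϑ ω) (phat (S ω)))
    (Dbar Vbar : Ω → ℝ)
    (hDbar : Dbar = fun ω => ∫ ϑ, Δ ϑ ω ∂(phat (S ω)))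
    (hVbar : Vbar = fun ω => ∫ ϑ, V ϑ ω ∂(phat (S ω)))
    -- `E[V_θ]` is well defined and finite
    (hVbarInt : Integrable Vbar μ)
    (EV : ℝ) (hEV : EV = ∫ ω, Vbar ω ∂μ)
    (hpos : ∀ᵐ ω ∂μ, 0 < EV + Vbar ω)
    (x : ℝ) (hx : 0 ≤ x) :
    ∫⁻ ω, ENNReal.ofReal (exp (x *
        sqrt (max (Dbar ω ^ 2 / (EV + Vbar ω) - 2 * KL ω) 0))) ∂μ ≤
      ENNReal.ofReal (2 * exp (x ^ 2)) :=
  stmt6_general S Δ V hΔ hVmeas hV0 hcanon phat p0 hac hKLint KL hKL hΔint hVint Dbar Vbar hDbar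
    hVbar hVbarInt EV hEV hpos x
end

section
/- For any y > 0 and any x ≥ 2, with probability at least 1 − e^{−x} one has |E[Δ_θ | S]| ≤ √( 2 (y + E[V_θ | S]) ( KL(p̂_S ‖ p⁰) + x + (x/2) ln(1 + E[V_θ | S]/y) ) ). -/
set_option autoImplicit false

open MeasureTheory ProbabilityTheory Real InformationTheory
open scoped ENNReal

/-!
Mixing the canonical-pair bound over `λ ~ N(0, 1/y)` and `ϑ ~ p⁰` gives a nonnegative variable
`G = ∫∫ exp (λ Δ_ϑ - λ² V_ϑ / 2)` with `E[G] ≤ 1`, so by Markov `G < e^x` outside an event of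
probability at most `e^{-x}`. On that event the Donsker–Varadhan inequality, applied to the
posterior `p̂_S` against `p⁰`, yields `E[g(Δ_θ, V_θ) | S] ≤ KL(p̂_S ‖ p⁰) + x` for every `g` with
`e^g ≤ ∫ exp (λ Δ - λ² V / 2) dN(0, 1/y)(λ) = √(y / (y + V)) exp (Δ² / (2 (y + V)))`.
Taking for `g` the affine minorant of the logarithm of this Gaussian integral that touches it at
`(E[Δ_θ | S], E[V_θ | S])`, and using `x ≥ 1` to absorb the logarithmic term, gives the bound.
-/

section DonskerVaradhan

variable {α : Type*} [MeasurableSpace α] {ν p : Measure α} [IsProbabilityMeasure ν]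
  [IsProbabilityMeasure p] {g : α → ℝ}

theorem integral_le_integral_llr_add_log_integral_exp (hνp : ν ≪ p) (hg : Integrable g ν)
    (hexp : Integrable (fun a ↦ exp (g a)) p) (hllr : Integrable (llr ν p) ν) :
    ∫ a, g a ∂ν ≤ ∫ a, llr ν p a ∂ν + log (∫ a, exp (g a) ∂p) := by
  have : IsProbabilityMeasure (p.tilted g) := isProbabilityMeasure_tilted hexp
  have hgibbs : 0 ≤ ∫ a, llr ν (p.tilted g) a ∂ν := by
    rw [← toReal_klDiv_of_measure_eq (hνp.trans (absolutelyContinuous_tilted hexp)) (by simp)]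
    exact ENNReal.toReal_nonneg
  rw [integral_llr_tilted_right hνp hg hexp hllr] at hgibbs
  linarith

theorem integral_le_integral_llr_add_of_lintegral_exp_le (hνp : ν ≪ p)
    (hllr : Integrable (llr ν p) ν) (hgm : AEMeasurable g p) (hg : Integrable g ν) {x : ℝ}
    (hx : ∫⁻ a, ENNReal.ofReal (exp (g a)) ∂p ≤ ENNReal.ofReal (exp x)) :
    ∫ a, g a ∂ν ≤ ∫ a, llr ν p a ∂ν + x := by
  have hexp : Integrable (fun a ↦ exp (g a)) p := by
    refine ⟨(measurable_exp.comp_aemeasurable hgm).aestronglyMeasurable, ?_⟩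
    simp only [hasFiniteIntegral_iff_ofReal (Filter.Eventually.of_forall fun a ↦ (exp_pos _).le)]
    exact hx.trans_lt ENNReal.ofReal_lt_top
  have hlog : log (∫ a, exp (g a) ∂p) ≤ x := by
    rw [log_le_iff_le_exp (integral_exp_pos hexp), integral_eq_lintegral_of_nonneg_ae
      (Filter.Eventually.of_forall fun a ↦ (exp_pos _).le) hexp.aestronglyMeasurable]
    exact ENNReal.toReal_le_of_le_ofReal (exp_pos x).le hx
  linarith [integral_le_integral_llr_add_log_integral_exp hνp hg hexp hllr]

end DonskerVaradhan

theorem measure_le_lintegral_mixture_le_inv {Ω Θ : Type*} [MeasurableSpace Ω]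
    [MeasurableSpace Θ] {μ : Measure Ω} [SFinite μ] {ρ : Measure Θ} [IsProbabilityMeasure ρ]
    {f : Θ → Ω → ℝ≥0∞} (hf : Measurable (Function.uncurry f))
    (hf1 : ∀ θ, ∫⁻ ω, f θ ω ∂μ ≤ 1) (c : ℝ≥0∞) :
    μ {ω | c ≤ ∫⁻ θ, f θ ω ∂ρ} ≤ c⁻¹ := by
  have hmix : ∫⁻ ω, ∫⁻ θ, f θ ω ∂ρ ∂μ ≤ 1 :=
    calc ∫⁻ ω, ∫⁻ θ, f θ ω ∂ρ ∂μ = ∫⁻ θ, ∫⁻ ω, f θ ω ∂μ ∂ρ :=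
          lintegral_lintegral_swap (hf.comp measurable_swap).aemeasurable
      _ ≤ ∫⁻ _, 1 ∂ρ := lintegral_mono hf1
      _ = 1 := by simp
  rw [ENNReal.le_inv_iff_mul_le, mul_comm]
  exact (mul_meas_ge_le_lintegral₀ hf.lintegral_prod_left.aemeasurable c).trans hmix

section GaussianMixture

variable {y u : ℝ}

theorem gaussianPDFReal_mul_exp_mul_sub_sq (hy : 0 < y) (hyu : 0 < y + u) (δ l : ℝ) :
    gaussianPDFReal 0 (1 / y).toNNReal l * exp (l * δ - l ^ 2 / 2 * u)
      = √(y / (y + u)) * exp (δ ^ 2 / (2 * (y + u)))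
        * gaussianPDFReal (δ / (y + u)) (1 / (y + u)).toNNReal l := by
  simp only [gaussianPDFReal, Real.coe_toNNReal _ (one_div_pos.2 hy).le,
    Real.coe_toNNReal _ (one_div_pos.2 hyu).le]
  have hsqrt : (√(2 * π * (1 / y)))⁻¹ = √(y / (y + u)) * (√(2 * π * (1 / (y + u))))⁻¹ := by
    rw [← Real.sqrt_inv, ← Real.sqrt_inv, ← Real.sqrt_mul (by positivity)]
    congr 1
    field_simp
  have hexp : exp (-(l - 0) ^ 2 / (2 * (1 / y))) * exp (l * δ - l ^ 2 / 2 * u)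
      = exp (δ ^ 2 / (2 * (y + u))) * exp (-(l - δ / (y + u)) ^ 2 / (2 * (1 / (y + u)))) := by
    rw [← exp_add, ← exp_add]
    congr 1
    field_simp
    ring
  rw [hsqrt, mul_assoc, hexp]
  ring

theorem lintegral_exp_mul_sub_sq_gaussianReal (hy : 0 < y) (hyu : 0 < y + u) (δ : ℝ) :
    ∫⁻ l, ENNReal.ofReal (exp (l * δ - l ^ 2 / 2 * u)) ∂gaussianReal 0 (1 / y).toNNReal
      = ENNReal.ofReal (√(y / (y + u)) * exp (δ ^ 2 / (2 * (y + u)))) := by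
  have hvar {s : ℝ} (hs : 0 < s) : (1 / s).toNNReal ≠ 0 := by
    simpa using hs
  rw [gaussianReal_of_var_ne_zero _ (hvar hy), lintegral_withDensity_eq_lintegral_mul _
    (measurable_gaussianPDF _ _) (by fun_prop)]
  calc ∫⁻ l, gaussianPDF 0 (1 / y).toNNReal l * ENNReal.ofReal (exp (l * δ - l ^ 2 / 2 * u))
      = ∫⁻ l, ENNReal.ofReal (√(y / (y + u)) * exp (δ ^ 2 / (2 * (y + u))))
          * gaussianPDF (δ / (y + u)) (1 / (y + u)).toNNReal l := by
        congr 1 with l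
        rw [gaussianPDF, gaussianPDF, ← ENNReal.ofReal_mul (gaussianPDFReal_nonneg _ _ _),
          ← ENNReal.ofReal_mul (by positivity), gaussianPDFReal_mul_exp_mul_sub_sq hy hyu]
    _ = ENNReal.ofReal (√(y / (y + u)) * exp (δ ^ 2 / (2 * (y + u)))) := by
        rw [lintegral_const_mul _ (measurable_gaussianPDF _ _),
          lintegral_gaussianPDF_eq_one _ (hvar hyu), mul_one]

end GaussianMixture

/-- The Donsker–Varadhan lower bound for `log ∫ exp (l δ - l² u / 2) dN(0, 1/y)(l)` obtained
from the posterior `N(m, 1/(y+v))`; the last term is `KL(N(m, 1/(y+v)) ‖ N(0, 1/y))`. -/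
noncomputable def gaussianMinorant (y v m δ u : ℝ) : ℝ :=
  m * δ - (m ^ 2 + 1 / (y + v)) / 2 * u - (y * m ^ 2 + log (1 + v / y) - v / (y + v)) / 2

section GaussianMinorant

variable {y v u : ℝ}

theorem gaussianMinorant_le (hy : 0 < y) (hyv : 0 < y + v) (hyu : 0 < y + u) (m δ : ℝ) :
    gaussianMinorant y v m δ u ≤ log (y / (y + u)) / 2 + δ ^ 2 / (2 * (y + u)) := by
  have hsq : m * δ ≤ δ ^ 2 / (2 * (y + u)) + m ^ 2 * (y + u) / 2 := by
    have : 0 ≤ (δ - m * (y + u)) ^ 2 / (2 * (y + u)) := by positivity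
    have e : (δ - m * (y + u)) ^ 2 / (2 * (y + u))
        = δ ^ 2 / (2 * (y + u)) + m ^ 2 * (y + u) / 2 - m * δ := by
      field_simp
      ring
    linarith
  have hlog : log ((y + u) / (y + v)) ≤ (u - v) / (y + v) := by
    have e : (y + u) / (y + v) - 1 = (u - v) / (y + v) := by field_simp; ring
    exact e ▸ log_le_sub_one_of_pos (by positivity)
  have e1 : log (1 + v / y) = log (y + v) - log y := by
    rw [show 1 + v / y = (y + v) / y by field_simp, log_div hyv.ne' hy.ne']
  rw [log_div hyu.ne' hyv.ne', sub_div] at hlog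
  have e2 : (m ^ 2 + 1 / (y + v)) / 2 * u = m ^ 2 * u / 2 + u / (y + v) / 2 := by ring
  rw [gaussianMinorant, e1, e2, log_div hy.ne' hyu.ne']
  linarith

theorem ofReal_exp_gaussianMinorant_le_lintegral (hy : 0 < y) (hyv : 0 < y + v)
    (hyu : 0 < y + u) (m δ : ℝ) :
    ENNReal.ofReal (exp (gaussianMinorant y v m δ u))
      ≤ ∫⁻ l, ENNReal.ofReal (exp (l * δ - l ^ 2 / 2 * u)) ∂gaussianReal 0 (1 / y).toNNReal := by
  rw [lintegral_exp_mul_sub_sq_gaussianReal hy hyu]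
  refine ENNReal.ofReal_le_ofReal ?_
  rw [← exp_log (by positivity : 0 < √(y / (y + u)) * exp (δ ^ 2 / (2 * (y + u)))),
    log_mul (by positivity) (exp_ne_zero _), log_exp, log_sqrt (by positivity), exp_le_exp]
  exact gaussianMinorant_le hy hyv hyu m δ

theorem gaussianMinorant_div (hyv : 0 < y + v) (δ : ℝ) :
    gaussianMinorant y v (δ / (y + v)) δ v = δ ^ 2 / (2 * (y + v)) - log (1 + v / y) / 2 := by
  unfold gaussianMinorant
  field_simp
  ring

end GaussianMinorant

theorem integral_gaussianMinorant {Θ : Type*} [MeasurableSpace Θ] {ν : Measure Θ}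
    [IsProbabilityMeasure ν] {d w : Θ → ℝ} (hd : Integrable d ν) (hw : Integrable w ν)
    (y v m : ℝ) :
    ∫ ϑ, gaussianMinorant y v m (d ϑ) (w ϑ) ∂ν
      = gaussianMinorant y v m (∫ ϑ, d ϑ ∂ν) (∫ ϑ, w ϑ ∂ν) := by
  unfold gaussianMinorant
  rw [integral_sub (f := fun ϑ ↦ m * d ϑ - _ * w ϑ) ((hd.const_mul _).sub (hw.const_mul _))
    (integrable_const _), integral_sub (hd.const_mul _) (hw.const_mul _), integral_const_mul,
    integral_const_mul, integral_const]
  simp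

theorem abs_integral_le_of_lintegral_gaussianReal_le {Θ : Type*} [MeasurableSpace Θ]
    {p0 ν : Measure Θ} [IsProbabilityMeasure p0] [IsProbabilityMeasure ν] (hνp : ν ≪ p0)
    (hllr : Integrable (llr ν p0) ν) {d w : Θ → ℝ} (hdm : Measurable d) (hwm : Measurable w)
    (hw0 : ∀ ϑ, 0 ≤ w ϑ) (hd : Integrable d ν) (hw : Integrable w ν) {y x : ℝ} (hy : 0 < y)
    (hx : 1 ≤ x)
    (hbound : ∫⁻ ϑ, ∫⁻ l, ENNReal.ofReal (exp (l * d ϑ - l ^ 2 / 2 * w ϑ))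
      ∂gaussianReal 0 (1 / y).toNNReal ∂p0 ≤ ENNReal.ofReal (exp x)) :
    |∫ ϑ, d ϑ ∂ν| ≤ √(2 * (y + ∫ ϑ, w ϑ ∂ν)
      * (∫ ϑ, llr ν p0 ϑ ∂ν + x + x / 2 * log (1 + (∫ ϑ, w ϑ ∂ν) / y))) := by
  set D := ∫ ϑ, d ϑ ∂ν
  set v := ∫ ϑ, w ϑ ∂ν
  have hv0 : 0 ≤ v := integral_nonneg hw0
  have hyv : 0 < y + v := by linarith
  have hDV : gaussianMinorant y v (D / (y + v)) D v ≤ ∫ ϑ, llr ν p0 ϑ ∂ν + x := by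
    rw [← integral_gaussianMinorant hd hw]
    refine integral_le_integral_llr_add_of_lintegral_exp_le
      (g := fun ϑ ↦ gaussianMinorant y v (D / (y + v)) (d ϑ) (w ϑ)) hνp hllr
      (by unfold gaussianMinorant; fun_prop)
      (((hd.const_mul _).sub (hw.const_mul _)).sub (integrable_const _))
      ((lintegral_mono fun ϑ ↦ ?_).trans hbound)
    exact ofReal_exp_gaussianMinorant_le_lintegral hy hyv (by linarith [hw0 ϑ]) _ _
  rw [gaussianMinorant_div hyv] at hDV
  have hlog : 0 ≤ log (1 + v / y) := log_nonneg (by linarith [div_nonneg hv0 hy.le])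
  have hsq : D ^ 2 ≤ 2 * (y + v) * (∫ ϑ, llr ν p0 ϑ ∂ν + x + x / 2 * log (1 + v / y)) := by
    rw [← div_le_iff₀' (by positivity)]
    nlinarith
  rw [← sqrt_sq_eq_abs]
  exact sqrt_le_sqrt hsq

theorem stmt8_general
    {Ω Z Θ : Type*} [MeasurableSpace Ω] [MeasurableSpace Z] [MeasurableSpace Θ]
    {μ : Measure Ω} [IsProbabilityMeasure μ]
    (S : Ω → Z)
    (Δ V : Θ → Ω → ℝ)
    (hΔ : Measurable (Function.uncurry Δ)) (hVmeas : Measurable (Function.uncurry V))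
    (hV0 : ∀ ϑ ω, 0 ≤ V ϑ ω)
    -- each pair `(Δ_ϑ, √V_ϑ)` is a canonical pair
    (hcanon : ∀ ϑ, ∀ lam : ℝ,
      ∫⁻ ω, ENNReal.ofReal (exp (lam * Δ ϑ ω - lam ^ 2 / 2 * V ϑ ω)) ∂μ ≤ 1)
    (phat : Kernel Z Θ) [IsMarkovKernel phat]
    (p0 : Measure Θ) [IsProbabilityMeasure p0]
    -- a.s. absolute continuity and a.s. finiteness of the KL divergence
    (hac : ∀ᵐ ω ∂μ, phat (S ω) ≪ p0)
    (hKLint : ∀ᵐ ω ∂μ,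
      Integrable (fun ϑ => log ((phat (S ω)).rnDeriv p0 ϑ).toReal) (phat (S ω)))
    (KL : Ω → ℝ)
    (hKL : KL = fun ω => ∫ ϑ, log ((phat (S ω)).rnDeriv p0 ϑ).toReal ∂(phat (S ω)))
    -- `E[Δ_θ | S]` and `E[V_θ | S]` are well defined and finite
    (hΔint : ∀ᵐ ω ∂μ, Integrable (fun ϑ => Δ ϑ ω) (phat (S ω)))
    (hVint : ∀ᵐ ω ∂μ, Integrable (fun ϑ => V ϑ ω) (phat (S ω)))
    (Dbar Vbar : Ω → ℝ)
    (hDbar : Dbar = fun ω => ∫ ϑ, Δ ϑ ω ∂(phat (S ω)))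
    (hVbar : Vbar = fun ω => ∫ ϑ, V ϑ ω ∂(phat (S ω)))
    (y x : ℝ) (hy : 0 < y) (hx : 2 ≤ x) :
    ENNReal.ofReal (1 - exp (-x)) ≤
      μ {ω | |Dbar ω| ≤
        sqrt (2 * (y + Vbar ω) * (KL ω + x + x / 2 * log (1 + Vbar ω / y)))} := by
  set f : Θ × ℝ → Ω → ℝ≥0∞ :=
    fun z ω ↦ ENNReal.ofReal (exp (z.2 * Δ z.1 ω - z.2 ^ 2 / 2 * V z.1 ω))
  have hf : Measurable (Function.uncurry f) := by
    have hΔ' : Measurable fun p : (Θ × ℝ) × Ω ↦ Δ p.1.1 p.2 :=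
      hΔ.comp (measurable_fst.fst.prodMk measurable_snd)
    have hV' : Measurable fun p : (Θ × ℝ) × Ω ↦ V p.1.1 p.2 :=
      hVmeas.comp (measurable_fst.fst.prodMk measurable_snd)
    fun_prop
  set bad := {ω | ENNReal.ofReal (exp x) ≤ ∫⁻ z, f z ω ∂p0.prod (gaussianReal 0 (1 / y).toNNReal)}
  have hbad : μ bad ≤ ENNReal.ofReal (exp (-x)) := by
    rw [exp_neg, ENNReal.ofReal_inv_of_pos (exp_pos x)]
    exact measure_le_lintegral_mixture_le_inv hf (fun z ↦ hcanon z.1 z.2) _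
  have hgood : ∀ᵐ ω ∂μ, ω ∈ badᶜ → |Dbar ω| ≤
      sqrt (2 * (y + Vbar ω) * (KL ω + x + x / 2 * log (1 + Vbar ω / y))) := by
    filter_upwards [hac, hKLint, hΔint, hVint] with ω hacω hKLω hΔω hVω hω
    rw [Set.mem_compl_iff, Set.mem_ofPred_eq, not_le,
      lintegral_prod _ hf.of_uncurry_right.aemeasurable] at hω
    rw [hDbar, hVbar, hKL]
    exact abs_integral_le_of_lintegral_gaussianReal_le hacω hKLω hΔ.of_uncurry_right
      hVmeas.of_uncurry_right (hV0 · ω) hΔω hVω hy (by linarith) hω.le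
  calc ENNReal.ofReal (1 - exp (-x)) = 1 - ENNReal.ofReal (exp (-x)) := by
        rw [ENNReal.ofReal_sub _ (exp_nonneg _), ENNReal.ofReal_one]
    _ ≤ 1 - μ bad := tsub_le_tsub_left hbad 1
    _ ≤ μ badᶜ := tsub_le_iff_left.2 (by
        rw [← measure_univ (μ := μ), ← Set.union_compl_self bad]
        exact measure_union_le _ _)
    _ ≤ _ := measure_mono_ae hgood

/-- for any `y > 0` and `x ≥ 2`, with probability at least `1 − e^{−x}`,
`|E[Δ_θ|S]| ≤ √(2 (y + E[V_θ|S]) (KL(p̂_S‖p⁰) + x + (x/2) ln(1 + E[V_θ|S]/y)))`. -/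
theorem stmt8
    {Ω Z Θ : Type*} [MeasurableSpace Ω] [MeasurableSpace Z] [MeasurableSpace Θ]
    {μ : Measure Ω} [IsProbabilityMeasure μ]
    (S : Ω → Z) (hS : Measurable S)
    (Δ V : Θ → Ω → ℝ)
    (hΔ : Measurable (Function.uncurry Δ)) (hVmeas : Measurable (Function.uncurry V))
    (hV0 : ∀ ϑ ω, 0 ≤ V ϑ ω)
    -- each pair `(Δ_ϑ, √V_ϑ)` is a canonical pair
    (hcanon : ∀ ϑ, ∀ lam : ℝ,
      ∫⁻ ω, ENNReal.ofReal (exp (lam * Δ ϑ ω - lam ^ 2 / 2 * V ϑ ω)) ∂μ ≤ 1)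
    (phat : Kernel Z Θ) [IsMarkovKernel phat]
    (p0 : Measure Θ) [IsProbabilityMeasure p0]
    -- a.s. absolute continuity and a.s. finiteness of the KL divergence
    (hac : ∀ᵐ ω ∂μ, phat (S ω) ≪ p0)
    (hKLint : ∀ᵐ ω ∂μ,
      Integrable (fun ϑ => log ((phat (S ω)).rnDeriv p0 ϑ).toReal) (phat (S ω)))
    (KL : Ω → ℝ)
    (hKL : KL = fun ω => ∫ ϑ, log ((phat (S ω)).rnDeriv p0 ϑ).toReal ∂(phat (S ω)))
    -- `E[Δ_θ | S]` and `E[V_θ | S]` are well defined and finite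
    (hΔint : ∀ᵐ ω ∂μ, Integrable (fun ϑ => Δ ϑ ω) (phat (S ω)))
    (hVint : ∀ᵐ ω ∂μ, Integrable (fun ϑ => V ϑ ω) (phat (S ω)))
    (Dbar Vbar : Ω → ℝ)
    (hDbar : Dbar = fun ω => ∫ ϑ, Δ ϑ ω ∂(phat (S ω)))
    (hVbar : Vbar = fun ω => ∫ ϑ, V ϑ ω ∂(phat (S ω)))
    (y x : ℝ) (hy : 0 < y) (hx : 2 ≤ x) :
    ENNReal.ofReal (1 - exp (-x)) ≤
      μ {ω | |Dbar ω| ≤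
        sqrt (2 * (y + Vbar ω) * (KL ω + x + x / 2 * log (1 + Vbar ω / y)))} :=
  stmt8_general S Δ V hΔ hVmeas hV0 hcanon phat p0 hac hKLint KL hKL hΔint hVint Dbar Vbar hDbar
    hVbar y x hy hx
end

section
/- Let W₁, …, Wₙ be i.i.d. nonnegative random variables with E[W₁²] < ∞ and E[W₁²] > 0. Then for any t ∈ [0, n E[W₁]), P( Σ_{i=1}^n W_i ≤ t ) ≤ exp( − (t − n E[W₁])² / (2 n E[W₁²]) ). -/
set_option autoImplicit false

open MeasureTheory ProbabilityTheory Real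
open scoped ENNReal

/-!
Chernoff's method with `s = (n E[W₁] - t) / (n E[W₁²])`: for `s ≥ 0` and `w ≥ 0` one has
`exp (-s w) ≤ 1 - s w + s² w² / 2`, so `E[exp (-s W₁)] ≤ exp (-s E[W₁] + s² E[W₁²] / 2)`; by
independence the moment generating function of the sum at `-s` is the `n`-th power of this, and
the choice of `s` minimises the resulting quadratic exponent.
-/

namespace Real

theorem exp_neg_le_one_sub_add_sq_div_two {x : ℝ} (hx : 0 ≤ x) :
    exp (-x) ≤ 1 - x + x ^ 2 / 2 := by
  let f : ℝ → ℝ := fun y => 1 - y + y ^ 2 / 2 - exp (-y)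
  have hf : ∀ y, HasDerivAt f (y - 1 + exp (-y)) y := fun y =>
    ((((hasDerivAt_id y).const_sub 1).add ((hasDerivAt_pow 2 y).div_const 2)).sub
      (hasDerivAt_neg y).exp).congr_deriv (by norm_num; ring)
  have hmono : MonotoneOn f (Set.Ici 0) := by
    refine monotoneOn_of_deriv_nonneg (convex_Ici 0)
      (fun y _ => (hf y).continuousAt.continuousWithinAt)
      (fun y _ => (hf y).differentiableAt.differentiableWithinAt) fun y _ => ?_
    rw [(hf y).deriv]
    linarith [add_one_le_exp (-y)]
  have := hmono Set.self_mem_Ici (Set.mem_Ici.2 hx) hx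
  simp only [f, neg_zero, exp_zero] at this
  linarith

end Real

namespace ProbabilityTheory

variable {Ω : Type*} [MeasurableSpace Ω] {μ : Measure Ω}

theorem integrable_exp_mul_of_nonpos_of_nonneg [IsFiniteMeasure μ] {X : Ω → ℝ}
    (hXm : AEMeasurable X μ) (hX : 0 ≤ᵐ[μ] X) {t : ℝ} (ht : t ≤ 0) :
    Integrable (fun ω => exp (t * X ω)) μ := by
  refine .of_bound (hXm.const_mul t).exp.aestronglyMeasurable 1 ?_
  filter_upwards [hX] with ω hω
  rw [norm_of_nonneg (exp_pos _).le, ← exp_zero]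
  exact exp_le_exp.2 (mul_nonpos_of_nonpos_of_nonneg ht hω)

theorem mgf_neg_le_exp_of_nonneg [IsProbabilityMeasure μ] {X : Ω → ℝ} (hX : 0 ≤ᵐ[μ] X)
    (hX2 : MemLp X 2 μ) {s : ℝ} (hs : 0 ≤ s) :
    mgf X μ (-s) ≤ exp (-s * ∫ ω, X ω ∂μ + s ^ 2 * (∫ ω, X ω ^ 2 ∂μ) / 2) := by
  have hX1 : Integrable X μ := hX2.integrable one_le_two
  have hXsq : Integrable (fun ω => X ω ^ 2) μ := hX2.integrable_sq
  have hlin : Integrable (fun ω => 1 - s * X ω) μ := (integrable_const 1).sub (hX1.const_mul s)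
  have hquad : Integrable (fun ω => s ^ 2 * X ω ^ 2 / 2) μ := (hXsq.const_mul _).div_const 2
  calc mgf X μ (-s) ≤ ∫ ω, (1 - s * X ω + s ^ 2 * X ω ^ 2 / 2) ∂μ := by
        refine integral_mono_of_nonneg (ae_of_all _ fun ω => (exp_pos _).le) (hlin.add hquad) ?_
        filter_upwards [hX] with ω hω
        simpa only [neg_mul, mul_pow] using exp_neg_le_one_sub_add_sq_div_two (mul_nonneg hs hω)
    _ = 1 + (-s * ∫ ω, X ω ∂μ + s ^ 2 * (∫ ω, X ω ^ 2 ∂μ) / 2) := by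
        rw [integral_add hlin hquad, integral_sub (integrable_const 1) (hX1.const_mul s),
          integral_div, integral_const_mul, integral_const_mul, integral_const]
        simp only [probReal_univ, one_smul]
        ring
    _ ≤ _ := by linarith [add_one_le_exp (-s * ∫ ω, X ω ∂μ + s ^ 2 * (∫ ω, X ω ^ 2 ∂μ) / 2)]

theorem measureReal_sum_le_le_exp_of_iid [IsProbabilityMeasure μ] {ι : Type*} [Fintype ι]
    {X : ι → Ω → ℝ} {j : ι} (hmeas : ∀ i, Measurable (X i)) (hnonneg : ∀ i, 0 ≤ᵐ[μ] X i)
    (hindep : iIndepFun X μ) (hident : ∀ i, IdentDistrib (X i) (X j) μ μ)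
    (hX2 : MemLp (X j) 2 μ) (t : ℝ) {s : ℝ} (hs : 0 ≤ s) :
    μ.real {ω | ∑ i, X i ω ≤ t} ≤
      exp (s * t + Fintype.card ι * (-s * ∫ ω, X j ω ∂μ + s ^ 2 * (∫ ω, X j ω ^ 2 ∂μ) / 2)) := by
  have hint : Integrable (fun ω => exp (-s * (∑ i, X i) ω)) μ :=
    hindep.integrable_exp_mul_sum hmeas fun i _ =>
      integrable_exp_mul_of_nonpos_of_nonneg (hmeas i).aemeasurable (hnonneg i) (neg_nonpos.2 hs)
  have hmgf : mgf (∑ i, X i) μ (-s) = mgf (X j) μ (-s) ^ Fintype.card ι :=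
    mgf_sum_of_identDistrib hmeas hindep (fun i _ k _ => (hident i).trans (hident k).symm)
      (Finset.mem_univ j) (-s)
  calc μ.real {ω | ∑ i, X i ω ≤ t}
      ≤ exp (- -s * t) * mgf (∑ i, X i) μ (-s) := by
        simpa only [Finset.sum_apply] using measure_le_le_exp_mul_mgf t (neg_nonpos.2 hs) hint
    _ ≤ exp (s * t) * exp (-s * ∫ ω, X j ω ∂μ + s ^ 2 * (∫ ω, X j ω ^ 2 ∂μ) / 2) ^
          Fintype.card ι := by
        rw [neg_neg, hmgf]
        gcongr
        exacts [mgf_nonneg, mgf_neg_le_exp_of_nonneg (hnonneg j) hX2 hs]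
    _ = _ := by rw [← exp_nat_mul, ← exp_add]

end ProbabilityTheory

theorem stmt14_general
    {Ω : Type*} [MeasurableSpace Ω] {μ : Measure Ω} [IsProbabilityMeasure μ]
    {n : ℕ} (hn : 0 < n)
    (W : Fin n → Ω → ℝ) (hWmeas : ∀ i, Measurable (W i)) (hWpos : ∀ i ω, 0 ≤ W i ω)
    (hindep : iIndepFun W μ)
    (hident : ∀ i, IdentDistrib (W i) (W ⟨0, hn⟩) μ μ)
    (hW2 : MemLp (W ⟨0, hn⟩) 2 μ)
    (EW EW2 : ℝ) (hEW : EW = ∫ ω, W ⟨0, hn⟩ ω ∂μ)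
    (hEW2 : EW2 = ∫ ω, (W ⟨0, hn⟩ ω) ^ 2 ∂μ) (hEW2pos : 0 < EW2)
    (t : ℝ) (ht : t < n * EW) :
    μ {ω | ∑ i, W i ω ≤ t} ≤
      ENNReal.ofReal (exp (-(t - n * EW) ^ 2 / (2 * n * EW2))) := by
  have hs : 0 ≤ (n * EW - t) / (n * EW2) := div_nonneg (by linarith) (by positivity)
  have h := measureReal_sum_le_le_exp_of_iid hWmeas (fun i => ae_of_all _ (hWpos i)) hindep hident
    hW2 t hs
  rw [← hEW, ← hEW2, Fintype.card_fin] at h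
  rw [ENNReal.le_ofReal_iff_toReal_le (measure_ne_top _ _) (exp_pos _).le]
  refine h.trans_eq (congrArg exp ?_)
  field_simp
  ring

/-- lower-tail Chernoff bound for sums of i.i.d. nonnegative weights:
for `t ∈ [0, n E[W₁])`,
`P(Σ Wᵢ ≤ t) ≤ exp(−(t − n E[W₁])² / (2 n E[W₁²]))`. -/
theorem stmt14
    {Ω : Type*} [MeasurableSpace Ω] {μ : Measure Ω} [IsProbabilityMeasure μ]
    {n : ℕ} (hn : 0 < n)
    (W : Fin n → Ω → ℝ) (hWmeas : ∀ i, Measurable (W i)) (hWpos : ∀ i ω, 0 ≤ W i ω)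
    (hindep : iIndepFun W μ)
    (hident : ∀ i, IdentDistrib (W i) (W ⟨0, hn⟩) μ μ)
    (hW2 : MemLp (W ⟨0, hn⟩) 2 μ)
    (EW EW2 : ℝ) (hEW : EW = ∫ ω, W ⟨0, hn⟩ ω ∂μ)
    (hEW2 : EW2 = ∫ ω, (W ⟨0, hn⟩ ω) ^ 2 ∂μ) (hEW2pos : 0 < EW2)
    (t : ℝ) (ht0 : 0 ≤ t) (ht : t < n * EW) :
    μ {ω | ∑ i, W i ω ≤ t} ≤
      ENNReal.ofReal (exp (-(t - n * EW) ^ 2 / (2 * n * EW2))) :=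
  stmt14_general hn W hWmeas hWpos hindep hident hW2 EW EW2 hEW hEW2 hEW2pos t ht
end

section
/- Let W₁, …, Wₙ be i.i.d. nonnegative random variables with E[W₁²] < ∞ and E[W₁²] > 0. Then for any x > 0, with probability at least 1 − e^{−x} one has Σ_{i=1}^n W_i ≥ N_x(n), where N_x(n) = ( n E[W₁] − √( 2 x n E[W₁²] ) )₊ and (s)₊ = max{0, s}. -/
set_option autoImplicit false

open MeasureTheory ProbabilityTheory Real
open scoped ENNReal

/-!
Chernoff's bound for the lower tail of `S = Σ Wᵢ`. For a nonnegative `W` and `λ ≥ 0`,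
`e^{-λW} ≤ 1 - λW + λ²W²/2`, so `E e^{-λW} ≤ exp (-λ E[W] + λ² E[W²]/2)`: the lower tail of a
nonnegative variable is sub-Gaussian with variance proxy `E[W²]`, with no assumption on its
upper tail. By independence `E e^{-λS} ≤ exp (-λ n E[W] + λ² n E[W²]/2)`, and the choice
`λ = t / (n E[W²])` with `t = √(2 x n E[W²])` gives `P(S ≤ n E[W] - t) ≤ e^{-x}`.
-/

lemma Real.exp_neg_le_one_sub_add_sq_div_two_s15 {u : ℝ} (hu : 0 ≤ u) :
    exp (-u) ≤ 1 - u + u ^ 2 / 2 := by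
  let f : ℝ → ℝ := fun v => 1 - v + v ^ 2 / 2 - exp (-v)
  have hf : ∀ v, HasDerivAt f (-1 + v + exp (-v)) v := fun v =>
    ((((hasDerivAt_id v).const_sub 1).add ((hasDerivAt_pow 2 v).div_const 2)).sub
      (hasDerivAt_id v).neg.exp).congr_deriv (by simp)
  have hf_mono : Monotone f := monotone_of_hasDerivAt_nonneg hf fun v => by
    simp only [Pi.zero_apply]
    linarith [add_one_le_exp (-v)]
  simpa [f] using hf_mono hu

section

variable {Ω : Type*} [MeasurableSpace Ω] {μ : Measure Ω}

lemma integrable_exp_neg_mul_of_nonneg [IsFiniteMeasure μ] {X : Ω → ℝ} (hX : 0 ≤ X)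
    (hX_meas : AEMeasurable X μ) {l : ℝ} (hl : 0 ≤ l) :
    Integrable (fun ω => exp (-l * X ω)) μ := by
  refine Integrable.mono' (integrable_const 1) (hX_meas.const_mul (-l)).exp.aestronglyMeasurable
    (Filter.Eventually.of_forall fun ω => ?_)
  rw [norm_of_nonneg (exp_pos _).le, exp_le_one_iff, neg_mul, neg_nonpos]
  exact mul_nonneg hl (hX ω)

lemma mgf_neg_le_exp_of_nonneg [IsProbabilityMeasure μ] {X : Ω → ℝ} (hX : 0 ≤ X)
    (hX2 : MemLp X 2 μ) {l : ℝ} (hl : 0 ≤ l) :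
    mgf X μ (-l) ≤ exp (-l * μ[X] + l ^ 2 * (∫ ω, X ω ^ 2 ∂μ) / 2) := by
  have hX1 : Integrable X μ := hX2.integrable one_le_two
  have h_lin : Integrable (fun ω => 1 - l * X ω) μ := (integrable_const 1).sub (hX1.const_mul l)
  have h_sq : Integrable (fun ω => l ^ 2 * X ω ^ 2 / 2) μ :=
    (hX2.integrable_sq.const_mul _).div_const 2
  calc mgf X μ (-l)
      ≤ ∫ ω, (1 - l * X ω + l ^ 2 * X ω ^ 2 / 2) ∂μ := by
        refine integral_mono (integrable_exp_neg_mul_of_nonneg hX hX2.aemeasurable hl)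
          (h_lin.add h_sq) fun ω => ?_
        have := exp_neg_le_one_sub_add_sq_div_two_s15 (mul_nonneg hl (hX ω))
        rw [neg_mul]
        linarith
    _ = 1 + (-l * μ[X] + l ^ 2 * (∫ ω, X ω ^ 2 ∂μ) / 2) := by
        rw [integral_add h_lin h_sq, integral_sub (integrable_const 1) (hX1.const_mul l),
          integral_div, integral_const_mul, integral_const_mul]
        simp only [integral_const, probReal_univ, smul_eq_mul, mul_one]
        ring
    _ ≤ exp (-l * μ[X] + l ^ 2 * (∫ ω, X ω ^ 2 ∂μ) / 2) := by
        linarith [add_one_le_exp (-l * μ[X] + l ^ 2 * (∫ ω, X ω ^ 2 ∂μ) / 2)]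

lemma mgf_sum_neg_le_exp_of_identDistrib {ι : Type*} [Fintype ι] {W : ι → Ω → ℝ} {j : ι}
    (h_indep : iIndepFun W μ) (hident : ∀ i, IdentDistrib (W i) (W j) μ μ) (hW : ∀ i, 0 ≤ W i)
    (hW2 : MemLp (W j) 2 μ) {l : ℝ} (hl : 0 ≤ l) :
    mgf (∑ i, W i) μ (-l) ≤
      exp (-l * (Fintype.card ι * μ[W j]) + l ^ 2 * (Fintype.card ι * ∫ ω, W j ω ^ 2 ∂μ) / 2) := by
  have : IsProbabilityMeasure μ := h_indep.isProbabilityMeasure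
  rw [mgf_sum_of_identDistrib₀ (fun i => (hident i).aemeasurable_fst) h_indep
    (fun i _ k _ => (hident i).trans (hident k).symm) (Finset.mem_univ j),
    Finset.card_univ]
  calc mgf (W j) μ (-l) ^ Fintype.card ι
      ≤ exp (-l * μ[W j] + l ^ 2 * (∫ ω, W j ω ^ 2 ∂μ) / 2) ^ Fintype.card ι :=
        pow_le_pow_left₀ mgf_nonneg (mgf_neg_le_exp_of_nonneg (hW j) hW2 hl) _
    _ = _ := by rw [← exp_nat_mul]; ring_nf

lemma measureReal_le_sub_le_exp_of_mgf_neg_le [IsFiniteMeasure μ] {S : Ω → ℝ} {m v t : ℝ}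
    (hv : 0 < v) (ht : 0 ≤ t)
    (hint : ∀ l, 0 ≤ l → Integrable (fun ω => exp (-l * S ω)) μ)
    (hmgf : ∀ l, 0 ≤ l → mgf S μ (-l) ≤ exp (-l * m + l ^ 2 * v / 2)) :
    μ.real {ω | S ω ≤ m - t} ≤ exp (-(t ^ 2 / (2 * v))) := by
  have hl : 0 ≤ t / v := div_nonneg ht hv.le
  calc μ.real {ω | S ω ≤ m - t}
      ≤ exp (-(-(t / v)) * (m - t)) * mgf S μ (-(t / v)) :=
        measure_le_le_exp_mul_mgf _ (neg_nonpos.2 hl) (hint _ hl)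
    _ ≤ exp (-(-(t / v)) * (m - t)) * exp (-(t / v) * m + (t / v) ^ 2 * v / 2) :=
        mul_le_mul_of_nonneg_left (hmgf _ hl) (exp_pos _).le
    _ = exp (-(t ^ 2 / (2 * v))) := by
        rw [← exp_add]
        congr 1
        field_simp
        ring

lemma ofReal_one_sub_le_of_compl_subset [IsProbabilityMeasure μ] {A B : Set Ω} {p : ℝ}
    (hAB : Aᶜ ⊆ B) (hB : μ.real B ≤ p) : ENNReal.ofReal (1 - p) ≤ μ A := by
  refine ENNReal.ofReal_le_of_le_toReal (show 1 - p ≤ μ.real A from ?_)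
  have := measureReal_union_le (μ := μ) A Aᶜ
  rw [Set.union_compl_self, probReal_univ] at this
  linarith [measureReal_mono (μ := μ) hAB]

end

theorem stmt15_general
    {Ω : Type*} [MeasurableSpace Ω] {μ : Measure Ω} [IsProbabilityMeasure μ]
    {n : ℕ} (hn : 0 < n)
    (W : Fin n → Ω → ℝ) (hWpos : ∀ i ω, 0 ≤ W i ω)
    (hindep : iIndepFun W μ)
    (hident : ∀ i, IdentDistrib (W i) (W ⟨0, hn⟩) μ μ)
    (hW2 : MemLp (W ⟨0, hn⟩) 2 μ)
    (EW EW2 : ℝ) (hEW : EW = ∫ ω, W ⟨0, hn⟩ ω ∂μ)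
    (hEW2 : EW2 = ∫ ω, (W ⟨0, hn⟩ ω) ^ 2 ∂μ) (hEW2pos : 0 < EW2)
    (x : ℝ) (hx : 0 < x) :
    ENNReal.ofReal (1 - exp (-x)) ≤
      μ {ω | max ((n : ℝ) * EW - sqrt (2 * x * n * EW2)) 0 ≤ ∑ i, W i ω} := by
  have hv : 0 < (n : ℝ) * EW2 := mul_pos (Nat.cast_pos.2 hn) hEW2pos
  have hS : 0 ≤ ∑ i, W i := Finset.sum_nonneg fun i _ => hWpos i
  have htail := measureReal_le_sub_le_exp_of_mgf_neg_le (μ := μ) (m := n * EW)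
    (t := sqrt (2 * x * n * EW2)) hv (sqrt_nonneg _)
    (fun l hl => integrable_exp_neg_mul_of_nonneg hS
      (Finset.aemeasurable_sum _ fun i _ => (hident i).aemeasurable_fst) hl)
    (fun l hl => by
      simpa [hEW, hEW2] using mgf_sum_neg_le_exp_of_identDistrib hindep hident hWpos hW2 hl)
  rw [sq_sqrt (by positivity), show 2 * x * n * EW2 / (2 * (n * EW2)) = x by field_simp] at htail
  refine ofReal_one_sub_le_of_compl_subset (fun ω hω => ?_) htail
  simp only [Set.mem_compl_iff, Set.mem_ofPred_eq, not_le, Finset.sum_apply] at hω ⊢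
  exact ((lt_max_iff.1 hω).resolve_right (Finset.sum_nonneg fun i _ => hWpos i ω).not_gt).le

/-- for i.i.d. nonnegative weights and any `x > 0`, with probability at
least `1 − e^{−x}`, `Σ Wᵢ ≥ N_x(n) = (n E[W₁] − √(2 x n E[W₁²]))₊`. -/
theorem stmt15
    {Ω : Type*} [MeasurableSpace Ω] {μ : Measure Ω} [IsProbabilityMeasure μ]
    {n : ℕ} (hn : 0 < n)
    (W : Fin n → Ω → ℝ) (hWmeas : ∀ i, Measurable (W i)) (hWpos : ∀ i ω, 0 ≤ W i ω)
    (hindep : iIndepFun W μ)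
    (hident : ∀ i, IdentDistrib (W i) (W ⟨0, hn⟩) μ μ)
    (hW2 : MemLp (W ⟨0, hn⟩) 2 μ)
    (EW EW2 : ℝ) (hEW : EW = ∫ ω, W ⟨0, hn⟩ ω ∂μ)
    (hEW2 : EW2 = ∫ ω, (W ⟨0, hn⟩ ω) ^ 2 ∂μ) (hEW2pos : 0 < EW2)
    (x : ℝ) (hx : 0 < x) :
    ENNReal.ofReal (1 - exp (-x)) ≤
      μ {ω | max ((n : ℝ) * EW - sqrt (2 * x * n * EW2)) 0 ≤ ∑ i, W i ω} :=
  stmt15_general hn W hWpos hindep hident hW2 EW EW2 hEW hEW2 hEW2pos x hx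
end
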